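/- arXiv:1302.6443 — 11 statements merged into one kernel-verified Lean document; each statement's English description precedes it below -/
import Mathlib

section
/- If X is a strictly convex real normed space, then for all unit vectors x ≠ y and every δ > 0 there exists z ∈ X with ‖z‖ < δ such that ‖x + z‖ < 1 and ‖y + z‖ > 1 (or vice versa). -/
/-! Take `z = t • (y - x)` with `t ∈ (0, 1)` small. Then `x + z` lies strictly inside the segment
`[x, y]`, so `‖x + z‖ < 1` by strict convexity. On the other hand `y` lies strictly inside the
segment `[x, y + z]`, so `‖y + z‖ ≤ 1` would force `‖y‖ < 1`. -/

section StrictConvexSpace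

variable {E : Type*} [NormedAddCommGroup E] [NormedSpace ℝ E] [StrictConvexSpace ℝ E]
  {x y : E} {t : ℝ}

theorem norm_add_smul_sub_lt_one (hx : ‖x‖ ≤ 1) (hy : ‖y‖ ≤ 1) (hne : x ≠ y) (ht₀ : 0 < t)
    (ht₁ : t < 1) : ‖x + t • (y - x)‖ < 1 := by
  have hcombo : x + t • (y - x) = (1 - t) • x + t • y := by module
  rw [hcombo]
  exact norm_combo_lt_of_ne hx hy hne (by linarith) ht₀ (by ring)

theorem one_lt_norm_add_smul_sub (hx : ‖x‖ ≤ 1) (hy : ‖y‖ = 1) (hne : x ≠ y) (ht : 0 < t) :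
    1 < ‖y + t • (y - x)‖ := by
  by_contra! hw
  set w := y + t • (y - x)
  have hwx : w ≠ x := by
    have : w - x = (1 + t) • (y - x) := by module
    rw [← sub_ne_zero, this]
    exact smul_ne_zero (by linarith) (sub_ne_zero.mpr hne.symm)
  have hy_combo : y = (1 + t)⁻¹ • w + (t / (1 + t)) • x := by
    have : (1 + t : ℝ) ≠ 0 := by linarith
    match_scalars <;> field_simp; ring
  have hy_lt : ‖y‖ < 1 := by
    rw [hy_combo]
    exact norm_combo_lt_of_ne hw hx hwx (by positivity) (by positivity) (by field_simp)
  exact hy_lt.ne hy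

end StrictConvexSpace

theorem stmt0 {X : Type*} [NormedAddCommGroup X] [NormedSpace ℝ X]
    (hsc : ∀ x y : X, x ≠ y → ‖x‖ = 1 → ‖y‖ = 1 →
      ∀ t : ℝ, 0 < t → t < 1 → ‖t • x + (1 - t) • y‖ < 1) :
    ∀ x y : X, ‖x‖ = 1 → ‖y‖ = 1 → x ≠ y → ∀ δ : ℝ, 0 < δ →
      ∃ z : X, ‖z‖ < δ ∧
        ((1 < ‖x + z‖ ∧ ‖y + z‖ < 1) ∨ (‖x + z‖ < 1 ∧ 1 < ‖y + z‖)) := by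
  have : StrictConvexSpace ℝ X := StrictConvexSpace.of_norm_combo_lt_one fun x y hx hy hne =>
    ⟨1 / 2, 1 - 1 / 2, by ring, hsc x y hne hx hy _ (by norm_num) (by norm_num)⟩
  intro x y hx hy hne δ hδ
  have hd : 0 < ‖y - x‖ := norm_pos_iff.mpr (sub_ne_zero.mpr hne.symm)
  obtain ⟨t, ht₀, ht⟩ := exists_between (lt_min one_pos (div_pos hδ hd))
  refine ⟨t • (y - x), ?_, Or.inr ⟨?_, ?_⟩⟩
  · rw [norm_smul, Real.norm_of_nonneg ht₀.le]
    exact (lt_div_iff₀ hd).mp (ht.trans_le (min_le_right _ _))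
  · exact norm_add_smul_sub_lt_one hx.le hy.le hne ht₀ (ht.trans_le (min_le_left _ _))
  · exact one_lt_norm_add_smul_sub hx.le hy hne ht₀
end

section
/- Every Banach space with Steinhaus' property (S) satisfies the local separation property (S'): for all unit vectors x ≠ y and every δ > 0 there exists z with ‖z‖ < δ such that exactly one of ‖x + z‖, ‖y + z‖ is greater than 1 and the other is less than 1. -/
/-- Property (S): for every quasi-finite set `A` (infinite, meeting every closed ball
in a finite set) there is a dense set `Y` such that for every `y ∈ Y` and every `n`
some open ball centred at `y` contains exactly `n` points of `A`. -/
def SteinhausS (X : Type*) [NormedAddCommGroup X] [NormedSpace ℝ X] : Prop :=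
  ∀ A : Set X, A.Infinite → (∀ (x : X) (r : ℝ), (A ∩ Metric.closedBall x r).Finite) →
    ∃ Y : Set X, Dense Y ∧ ∀ y ∈ Y, ∀ n : ℕ, ∃ r > (0 : ℝ),
      (A ∩ Metric.ball y r).Finite ∧ (A ∩ Metric.ball y r).ncard = n

/-- Property (S'): the unit sphere does not look locally alike at two distinct points. -/
def SteinhausS' (X : Type*) [NormedAddCommGroup X] [NormedSpace ℝ X] : Prop :=
  ∀ x y : X, ‖x‖ = 1 → ‖y‖ = 1 → x ≠ y → ∀ δ : ℝ, 0 < δ →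
    ∃ z : X, ‖z‖ < δ ∧
      ((1 < ‖x + z‖ ∧ ‖y + z‖ < 1) ∨ (‖x + z‖ < 1 ∧ 1 < ‖y + z‖))

set_option maxHeartbeats 1000000 in
theorem stmt6 {X : Type*} [NormedAddCommGroup X] [NormedSpace ℝ X] [CompleteSpace X]
    (hS : SteinhausS X) : SteinhausS' X := by
  intro x y hx hy hxy δ hδ
  by_contra hcon
  rw [not_exists] at hcon
  have hNeg : ∀ z : X, ‖z‖ < δ →
      ¬((1 < ‖x + z‖ ∧ ‖y + z‖ < 1) ∨ (‖x + z‖ < 1 ∧ 1 < ‖y + z‖)) :=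
    fun z hz hp => hcon z ⟨hz, hp⟩
  clear hcon
  obtain ⟨v, hv⟩ : ∃ v : X, v = x - y := ⟨_, rfl⟩
  have hvne : v ≠ 0 := by rw [hv]; exact sub_ne_zero.mpr hxy
  have hyxv : y = x - v := by rw [hv]; abel
  -- Step A: any unit vector p close to x satisfies ‖p - v‖ = 1
  have hA : ∀ p : X, ‖p‖ = 1 → ‖p - x‖ < δ / 2 → ‖p - v‖ = 1 := by
    intro p hp hpx
    by_contra hne
    rcases lt_or_gt_of_ne hne with hlt | hgt
    · -- ‖p - v‖ < 1 : expand p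
      set t := min (δ / 4) ((1 - ‖p - v‖) / 2) with ht
      have ht0 : 0 < t := lt_min (by linarith) (by linarith)
      have ht1 : t ≤ δ / 4 := min_le_left _ _
      have ht2 : t ≤ (1 - ‖p - v‖) / 2 := min_le_right _ _
      refine hNeg ((1 + t) • p - x) ?_ (Or.inl ⟨?_, ?_⟩)
      · have e : (1 + t) • p - x = (p - x) + t • p := by module
        rw [e]
        calc ‖(p - x) + t • p‖ ≤ ‖p - x‖ + ‖t • p‖ := norm_add_le _ _
          _ = ‖p - x‖ + t := by
              rw [norm_smul, hp, Real.norm_eq_abs, abs_of_pos ht0, mul_one]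
          _ < δ := by linarith
      · have e : x + ((1 + t) • p - x) = (1 + t) • p := by abel
        rw [e, norm_smul, hp, Real.norm_eq_abs, abs_of_pos (by linarith : (0:ℝ) < 1 + t),
          mul_one]
        linarith
      · have e : y + ((1 + t) • p - x) = (p - v) + t • p := by rw [hyxv]; module
        rw [e]
        calc ‖(p - v) + t • p‖ ≤ ‖p - v‖ + ‖t • p‖ := norm_add_le _ _
          _ = ‖p - v‖ + t := by
              rw [norm_smul, hp, Real.norm_eq_abs, abs_of_pos ht0, mul_one]
          _ < 1 := by linarith
    · -- ‖p - v‖ > 1 : shrink p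
      set t := min (δ / 4) ((‖p - v‖ - 1) / 2) with ht
      have ht0 : 0 < t := lt_min (by linarith) (by linarith)
      have ht1 : t ≤ δ / 4 := min_le_left _ _
      have ht2 : t ≤ (‖p - v‖ - 1) / 2 := min_le_right _ _
      have htle1 : t ≤ 1 := by
        have hpv3 : ‖p - v‖ ≤ ‖p‖ + ‖v‖ := norm_sub_le _ _
        have : ‖v‖ ≤ 2 := by
          rw [hv]
          calc ‖x - y‖ ≤ ‖x‖ + ‖y‖ := norm_sub_le _ _
            _ = 2 := by rw [hx, hy]; norm_num
        have : ‖p - v‖ ≤ 3 := by rw [hp] at hpv3; linarith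
        linarith
      refine hNeg ((1 - t) • p - x) ?_ (Or.inr ⟨?_, ?_⟩)
      · have e : (1 - t) • p - x = (p - x) - t • p := by module
        rw [e]
        calc ‖(p - x) - t • p‖ ≤ ‖p - x‖ + ‖t • p‖ := norm_sub_le _ _
          _ = ‖p - x‖ + t := by
              rw [norm_smul, hp, Real.norm_eq_abs, abs_of_pos ht0, mul_one]
          _ < δ := by linarith
      · have e : x + ((1 - t) • p - x) = (1 - t) • p := by abel
        rw [e, norm_smul, hp, Real.norm_eq_abs, abs_of_nonneg (by linarith : (0:ℝ) ≤ 1 - t),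
          mul_one]
        linarith
      · have e : y + ((1 - t) • p - x) = (p - v) - t • p := by rw [hyxv]; module
        rw [e]
        have hlow : ‖p - v‖ - ‖t • p‖ ≤ ‖(p - v) - t • p‖ := norm_sub_norm_le _ _
        have htp : ‖t • p‖ = t := by
          rw [norm_smul, hp, Real.norm_eq_abs, abs_of_pos ht0, mul_one]
        rw [htp] at hlow
        linarith
  -- Step B: cylinder: the whole segment from p to p - v lies on the unit sphere
  have hB : ∀ p : X, ‖p‖ = 1 → ‖p - x‖ < δ / 2 → ∀ t : ℝ, 0 ≤ t → t ≤ 1 →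
      ‖p - t • v‖ = 1 := by
    intro p hp hpx t ht0 ht1
    have hpv := hA p hp hpx
    have hub : ‖p - t • v‖ ≤ 1 := by
      have e : p - t • v = (1 - t) • p + t • (p - v) := by module
      rw [e]
      calc ‖(1 - t) • p + t • (p - v)‖ ≤ ‖(1 - t) • p‖ + ‖t • (p - v)‖ := norm_add_le _ _
        _ = (1 - t) + t := by
            rw [norm_smul, norm_smul, hp, hpv, Real.norm_eq_abs, Real.norm_eq_abs,
              abs_of_nonneg (by linarith : (0:ℝ) ≤ 1 - t), abs_of_nonneg ht0, mul_one, mul_one]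
        _ = 1 := by ring
    rcases eq_or_lt_of_le hub with h | hg
    · exact h
    · exfalso
      have ht0' : 0 < t := by
        rcases eq_or_lt_of_le ht0 with h0 | h0
        · exfalso; rw [← h0, zero_smul, sub_zero, hp] at hg; linarith
        · exact h0
      have ht1' : t < 1 := by
        rcases eq_or_lt_of_le ht1 with h1 | h1
        · exfalso; rw [h1, one_smul, hpv] at hg; linarith
        · exact h1
      set s := min ((1 - t) / 2) (δ / (4 * (‖v‖ + 1))) with hs
      have hvnn : (0:ℝ) ≤ ‖v‖ := norm_nonneg v
      have hs0 : 0 < s := lt_min (by linarith) (by positivity)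
      have hs1 : s ≤ (1 - t) / 2 := min_le_left _ _
      have hs2 : s ≤ δ / (4 * (‖v‖ + 1)) := min_le_right _ _
      have hsv : s * ‖v‖ ≤ δ / 4 := by
        have h1 : s * ‖v‖ ≤ (δ / (4 * (‖v‖ + 1))) * ‖v‖ :=
          mul_le_mul_of_nonneg_right hs2 hvnn
        have h2 : (δ / (4 * (‖v‖ + 1))) * ‖v‖ ≤ δ / 4 := by
          rw [div_mul_eq_mul_div, div_le_div_iff₀ (by positivity) (by norm_num : (0:ℝ) < 4)]
          nlinarith
        linarith
      have hu : ‖p + s • v - x‖ < δ := by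
        have e : p + s • v - x = (p - x) + s • v := by abel
        rw [e]
        calc ‖(p - x) + s • v‖ ≤ ‖p - x‖ + ‖s • v‖ := norm_add_le _ _
          _ = ‖p - x‖ + s * ‖v‖ := by rw [norm_smul, Real.norm_eq_abs, abs_of_pos hs0]
          _ < δ := by linarith
      refine hNeg (p + s • v - x) hu (Or.inl ⟨?_, ?_⟩)
      · -- 1 < ‖x + u‖ = ‖p + s • v‖
        have e : x + (p + s • v - x) = p + s • v := by abel
        rw [e]
        have hkey : (s + t) • p = t • (p + s • v) + s • (p - t • v) := by module
        have hnorm : (s + t) ≤ t * ‖p + s • v‖ + s * ‖p - t • v‖ := by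
          have h1 : ‖(s + t) • p‖ = s + t := by
            rw [norm_smul, hp, Real.norm_eq_abs, abs_of_pos (by linarith), mul_one]
          calc (s + t) = ‖(s + t) • p‖ := h1.symm
            _ = ‖t • (p + s • v) + s • (p - t • v)‖ := by rw [hkey]
            _ ≤ ‖t • (p + s • v)‖ + ‖s • (p - t • v)‖ := norm_add_le _ _
            _ = t * ‖p + s • v‖ + s * ‖p - t • v‖ := by
                rw [norm_smul, norm_smul, Real.norm_eq_abs, Real.norm_eq_abs,
                  abs_of_pos ht0', abs_of_pos hs0]
        nlinarith
      · -- ‖y + u‖ = ‖p - (1 - s) • v‖ < 1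
        have e : y + (p + s • v - x) = p - (1 - s) • v := by rw [hyxv]; module
        rw [e]
        have hkey : (1 - t) • (p - (1 - s) • v) = s • (p - t • v) + ((1 - t) - s) • (p - v) := by
          module
        have hnorm : (1 - t) * ‖p - (1 - s) • v‖ ≤ s * ‖p - t • v‖ + ((1 - t) - s) := by
          have h1 : ‖(1 - t) • (p - (1 - s) • v)‖ = (1 - t) * ‖p - (1 - s) • v‖ := by
            rw [norm_smul, Real.norm_eq_abs, abs_of_pos (by linarith)]
          calc (1 - t) * ‖p - (1 - s) • v‖ = ‖(1 - t) • (p - (1 - s) • v)‖ := h1.symm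
            _ = ‖s • (p - t • v) + ((1 - t) - s) • (p - v)‖ := by rw [hkey]
            _ ≤ ‖s • (p - t • v)‖ + ‖((1 - t) - s) • (p - v)‖ := norm_add_le _ _
            _ = s * ‖p - t • v‖ + ((1 - t) - s) := by
                rw [norm_smul, norm_smul, hpv, Real.norm_eq_abs, Real.norm_eq_abs,
                  abs_of_pos hs0, abs_of_nonneg (by linarith : (0:ℝ) ≤ (1 - t) - s), mul_one]
        nlinarith
  -- Step C: bisector: x and x - (1/2)v are equidistant from every center near 0
  obtain ⟨ε, hε⟩ : ∃ ε : ℝ, ε = min (δ / 8) (1 / 4 : ℝ) := ⟨_, rfl⟩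
  have hε0 : 0 < ε := by rw [hε]; exact lt_min (by linarith) (by norm_num)
  have hεδ : ε ≤ δ / 8 := by rw [hε]; exact min_le_left _ _
  have hε4 : ε ≤ 1 / 4 := by rw [hε]; exact min_le_right _ _
  have hC : ∀ c : X, ‖c‖ < ε → ‖x - (2:ℝ)⁻¹ • v - c‖ = ‖x - c‖ := by
    intro c hc
    have hcnn : (0:ℝ) ≤ ‖c‖ := norm_nonneg c
    obtain ⟨R, hRdef⟩ : ∃ R : ℝ, R = ‖x - c‖ := ⟨_, rfl⟩
    have hR1 : 3 / 4 ≤ R := by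
      have h1 : ‖x‖ - ‖c‖ ≤ ‖x - c‖ := norm_sub_norm_le x c
      rw [hx, ← hRdef] at h1; linarith
    have hR0 : (0:ℝ) < R := by linarith
    have hRne : R ≠ 0 := ne_of_gt hR0
    obtain ⟨p, hpdef⟩ : ∃ p : X, p = R⁻¹ • (x - c) := ⟨_, rfl⟩
    have hp : ‖p‖ = 1 := by
      rw [hpdef, norm_smul, Real.norm_eq_abs, abs_of_pos (inv_pos.mpr hR0), ← hRdef,
        inv_mul_cancel₀ hRne]
    have hid : R • (p - x) = (1 - R) • x - c := by
      rw [hpdef, smul_sub, smul_smul, mul_inv_cancel₀ hRne, one_smul]; module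
    have h1R : |1 - R| ≤ ‖c‖ := by
      have h2 := abs_norm_sub_norm_le x (x - c)
      have e : x - (x - c) = c := by abel
      rw [hx, e, ← hRdef] at h2
      exact h2
    have hn : ‖(1 - R) • x - c‖ ≤ 2 * ‖c‖ := by
      calc ‖(1 - R) • x - c‖ ≤ ‖(1 - R) • x‖ + ‖c‖ := norm_sub_le _ _
        _ = |1 - R| + ‖c‖ := by rw [norm_smul, hx, Real.norm_eq_abs, mul_one]
        _ ≤ 2 * ‖c‖ := by linarith
    have hpx : ‖p - x‖ < δ / 2 := by
      have h3 : R * ‖p - x‖ = ‖(1 - R) • x - c‖ := by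
        rw [← hid, norm_smul, Real.norm_eq_abs, abs_of_pos hR0]
      have h4 : R * ‖p - x‖ ≤ 2 * ‖c‖ := by rw [h3]; exact hn
      have h5 : ‖c‖ < δ / 8 := lt_of_lt_of_le hc hεδ
      nlinarith [norm_nonneg (p - x)]
    have ht0 : (0:ℝ) ≤ 1 / (2 * R) := by positivity
    have ht1 : 1 / (2 * R) ≤ 1 := by
      rw [div_le_one (by linarith)]; linarith
    have hcyl := hB p hp hpx (1 / (2 * R)) ht0 ht1
    have hRt : R * (1 / (2 * R)) = (2:ℝ)⁻¹ := by
      rw [mul_one_div, div_eq_iff (ne_of_gt (by linarith : (0:ℝ) < 2 * R))]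
      ring
    have hRp : R • p = x - c := by
      rw [hpdef, smul_smul, mul_inv_cancel₀ hRne, one_smul]
    have hfin : x - (2:ℝ)⁻¹ • v - c = R • (p - (1 / (2 * R)) • v) := by
      have e1 : R • (p - (1 / (2 * R)) • v) = R • p - (R * (1 / (2 * R))) • v := by
        module
      rw [e1, hRp, hRt]; abel
    rw [hfin, norm_smul, Real.norm_eq_abs, abs_of_pos hR0, hcyl, mul_one, hRdef]
  -- construct the quasi-finite set A
  have hxne0 : x ≠ 0 := by
    intro h; rw [h, norm_zero] at hx; norm_num at hx
  obtain ⟨b, hb⟩ : ∃ b : X, b = x - (2:ℝ)⁻¹ • v := ⟨_, rfl⟩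
  have hbnorm : ‖b‖ = 1 := by
    have h1 := hC 0 (by rw [norm_zero]; exact hε0)
    rw [sub_zero, sub_zero, hx, ← hb] at h1
    exact h1
  have hbx : b ≠ x := by
    rw [hb]
    intro h
    have h2 : (2:ℝ)⁻¹ • v = 0 := sub_eq_self.mp h
    rcases smul_eq_zero.mp h2 with h3 | h3
    · norm_num at h3
    · exact hvne h3
  obtain ⟨f, hf⟩ : ∃ f : ℕ → X, f = fun k : ℕ => ((k : ℝ) + 2) • x := ⟨_, rfl⟩
  have hfval : ∀ k : ℕ, f k = ((k : ℝ) + 2) • x := by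
    intro k; rw [hf]
  have hfnorm : ∀ k : ℕ, ‖f k‖ = (k : ℝ) + 2 := by
    intro k
    rw [hfval k, norm_smul, hx, mul_one, Real.norm_eq_abs, abs_of_pos (by positivity)]
  have hinj : Function.Injective f := by
    intro a a' haa
    have h1 : (((a : ℝ) + 2) - ((a' : ℝ) + 2)) • x = 0 := by
      rw [sub_smul]
      rw [hfval a, hfval a'] at haa
      rw [haa, sub_self]
    rcases smul_eq_zero.mp h1 with h2 | h2
    · have h3 : (a : ℝ) = (a' : ℝ) := by linarith [sub_eq_zero.mp h2]
      exact_mod_cast h3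
    · exact absurd h2 hxne0
  obtain ⟨A, hA'⟩ : ∃ A : Set X, A = insert x (insert b (Set.range f)) := ⟨_, rfl⟩
  have hxA : x ∈ A := by rw [hA']; exact Set.mem_insert _ _
  have hbA : b ∈ A := by rw [hA']; exact Set.mem_insert_of_mem _ (Set.mem_insert _ _)
  have hrange_sub : Set.range f ⊆ A := by
    rw [hA']
    exact (Set.subset_insert b _).trans (Set.subset_insert x _)
  have hInf : A.Infinite := (Set.infinite_range_of_injective hinj).mono hrange_sub
  have hQF : ∀ (x₀ : X) (r : ℝ), (A ∩ Metric.closedBall x₀ r).Finite := by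
    intro x₀ r
    apply Set.Finite.subset
      (((Set.finite_Iic ⌈r + ‖x₀‖⌉₊).image f).insert b |>.insert x)
    rintro z ⟨hzA, hzB⟩
    rw [hA'] at hzA
    rcases hzA with rfl | hzA
    · exact Set.mem_insert _ _
    rcases hzA with rfl | ⟨k, rfl⟩
    · exact Set.mem_insert_of_mem _ (Set.mem_insert _ _)
    · refine Set.mem_insert_of_mem _ (Set.mem_insert_of_mem _ ⟨k, ?_, rfl⟩)
      rw [Set.mem_Iic]
      have h1 : dist (f k) x₀ ≤ r := Metric.mem_closedBall.mp hzB
      rw [dist_eq_norm] at h1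
      have h2 : ‖f k‖ - ‖x₀‖ ≤ ‖f k - x₀‖ := norm_sub_norm_le _ _
      rw [hfnorm k] at h2
      have h3 : (k : ℝ) ≤ r + ‖x₀‖ := by linarith
      have h4 : (r + ‖x₀‖) ≤ (⌈r + ‖x₀‖⌉₊ : ℝ) := Nat.le_ceil _
      exact_mod_cast h3.trans h4
  obtain ⟨Y, hYd, hYall⟩ := hS A hInf hQF
  obtain ⟨y₀, hy₀ball, hy₀Y⟩ := Metric.dense_iff.mp hYd 0 ε hε0
  have hy₀ : ‖y₀‖ < ε := by
    have h1 := Metric.mem_ball.mp hy₀ball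
    rw [dist_zero_right] at h1
    exact h1
  obtain ⟨r, hr0, hFin, hcard⟩ := hYall y₀ hy₀Y 1
  have hy₀nn : (0:ℝ) ≤ ‖y₀‖ := norm_nonneg y₀
  have hd : ‖b - y₀‖ = ‖x - y₀‖ := by rw [hb]; exact hC y₀ hy₀
  have hxd : ‖x - y₀‖ ≤ 1 + ε := by
    calc ‖x - y₀‖ ≤ ‖x‖ + ‖y₀‖ := norm_sub_le _ _
      _ ≤ 1 + ε := by rw [hx]; linarith
  have hjfar : ∀ k : ℕ, 2 - ε ≤ ‖f k - y₀‖ := by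
    intro k
    have h1 : ‖f k‖ - ‖y₀‖ ≤ ‖f k - y₀‖ := norm_sub_norm_le _ _
    rw [hfnorm k] at h1
    have h2 : (0:ℝ) ≤ (k : ℝ) := Nat.cast_nonneg k
    linarith
  by_cases hj : ∃ k : ℕ, f k ∈ Metric.ball y₀ r
  · obtain ⟨k, hk⟩ := hj
    have hkr : 2 - ε < r := by
      have h1 := Metric.mem_ball.mp hk
      rw [dist_eq_norm] at h1
      linarith [hjfar k]
    have hxr : x ∈ Metric.ball y₀ r := by
      rw [Metric.mem_ball, dist_eq_norm]
      linarith
    have hbr : b ∈ Metric.ball y₀ r := by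
      rw [Metric.mem_ball, dist_eq_norm, hd]
      linarith
    have hxfk : x ≠ f k := by
      intro h
      have h1 := hfnorm k
      rw [← h, hx] at h1
      have h2 : (0:ℝ) ≤ (k : ℝ) := Nat.cast_nonneg k
      linarith
    have hbfk : b ≠ f k := by
      intro h
      have h1 := hfnorm k
      rw [← h, hbnorm] at h1
      have h2 : (0:ℝ) ≤ (k : ℝ) := Nat.cast_nonneg k
      linarith
    have hsub : ({x, b, f k} : Set X) ⊆ A ∩ Metric.ball y₀ r := by
      rintro z (rfl | rfl | rfl)
      · exact ⟨hxA, hxr⟩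
      · exact ⟨hbA, hbr⟩
      · exact ⟨hrange_sub ⟨k, rfl⟩, hk⟩
    have h3 : ({x, b, f k} : Set X).ncard = 3 := by
      rw [Set.ncard_insert_of_notMem (by simp [hbx.symm, hxfk]),
        Set.ncard_insert_of_notMem (by simp [hbfk]), Set.ncard_singleton]
    have h4 := Set.ncard_le_ncard hsub hFin
    rw [h3, hcard] at h4
    norm_num at h4
  · push_neg at hj
    by_cases hin : x ∈ Metric.ball y₀ r
    · have heq : A ∩ Metric.ball y₀ r = {x, b} := by
        ext z
        constructor
        · rintro ⟨hzA, hzB⟩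
          rw [hA'] at hzA
          rcases hzA with rfl | hzA
          · exact Set.mem_insert _ _
          rcases hzA with rfl | ⟨k, rfl⟩
          · exact Set.mem_insert_of_mem _ rfl
          · exact absurd hzB (hj k)
        · rintro (rfl | rfl)
          · exact ⟨hxA, hin⟩
          · refine ⟨hbA, ?_⟩
            rw [Metric.mem_ball, dist_eq_norm, hd, ← dist_eq_norm]
            exact Metric.mem_ball.mp hin
      rw [heq, Set.ncard_pair (Ne.symm hbx)] at hcard
      norm_num at hcard
    · have heq : A ∩ Metric.ball y₀ r = ∅ := by
        ext z
        simp only [Set.mem_empty_iff_false, iff_false]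
        rintro ⟨hzA, hzB⟩
        rw [hA'] at hzA
        rcases hzA with rfl | hzA
        · exact hin hzB
        rcases hzA with rfl | ⟨k, rfl⟩
        · apply hin
          rw [Metric.mem_ball, dist_eq_norm, ← hd, ← dist_eq_norm]
          exact Metric.mem_ball.mp hzB
        · exact hj k hzB
      rw [heq, Set.ncard_empty] at hcard
      norm_num at hcard
end

section
/- Every Banach space satisfying property (S') satisfies property (S); hence properties (S) and (S') are equivalent for Banach spaces. -/
/-!
Call a set `A` quasi-finite if it meets every closed ball in a finite set. Such a set is closed,
countable and nowhere dense. If the distances from `y ∉ A` to the points of `A` are pairwise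
distinct, the points of `A` can be listed by increasing distance from `y`, so that every count
`n` is realised by a ball around `y`. After rescaling, property (S') says that no
equidistant set `{y | dist a y = dist b y}` with `a ≠ b` contains a ball. Hence, by Baire's
theorem, the points `y ∉ A` with pairwise distinct distances to `A` form a dense set.
-/

open Filter Metric Set Topology

section QuasiFinite

variable {X : Type*} [MetricSpace X] {A : Set X}

theorem exists_mem_dist_gt_forall_le (hA : A.Infinite) {y : X}
    (hfin : ∀ r, (A ∩ closedBall y r).Finite) (r : ℝ) :
    ∃ a ∈ A, r < dist a y ∧ ∀ b ∈ A, r < dist b y → dist a y ≤ dist b y := by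
  obtain ⟨w, hwA, hw⟩ := (hA.sdiff (hfin r)).nonempty
  have hrw : r < dist w y := lt_of_not_ge fun h => hw ⟨hwA, h⟩
  obtain ⟨a, ⟨⟨haA, haw⟩, hra⟩, hmin⟩ := Set.exists_min_image
    (A ∩ closedBall y (dist w y) ∩ {b | r < dist b y}) (dist · y)
    ((hfin _).subset inter_subset_left) ⟨w, ⟨hwA, mem_closedBall.mpr le_rfl⟩, hrw⟩
  refine ⟨a, haA, hra, fun b hbA hrb => ?_⟩
  rcases le_total (dist b y) (dist w y) with hbw | hwb
  · exact hmin b ⟨⟨hbA, hbw⟩, hrb⟩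
  · exact le_trans haw hwb

theorem exists_ball_inter_ncard_eq (hA : A.Infinite) {y : X}
    (hfin : ∀ r, (A ∩ closedBall y r).Finite) (hy : y ∉ A) (hinj : InjOn (dist · y) A)
    (n : ℕ) : ∃ r > 0, (A ∩ ball y r).ncard = n := by
  have hclosedBall : ∀ n : ℕ, ∃ r ≥ 0, (A ∩ closedBall y r).ncard = n := by
    intro n
    induction n with
    | zero => exact ⟨0, le_rfl, by simp [hy]⟩
    | succ n ih =>
      obtain ⟨r, hr, hcard⟩ := ih
      obtain ⟨a, haA, hra, hmin⟩ := exists_mem_dist_gt_forall_le hA hfin r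
      -- `a` is the only point of `A` at distance in `(r, dist a y]`, by injectivity.
      have hinsert : A ∩ closedBall y (dist a y) = insert a (A ∩ closedBall y r) := by
        ext b
        simp only [mem_inter_iff, mem_closedBall, mem_insert_iff]
        constructor
        · rintro ⟨hbA, hba⟩
          rcases le_or_gt (dist b y) r with hbr | hrb
          · exact Or.inr ⟨hbA, hbr⟩
          · exact Or.inl (hinj hbA haA (le_antisymm hba (hmin b hbA hrb)))
        · rintro (rfl | ⟨hbA, hbr⟩)
          · exact ⟨haA, le_rfl⟩
          · exact ⟨hbA, hbr.trans hra.le⟩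
      have haB : a ∉ A ∩ closedBall y r := fun h => (not_le.mpr hra) h.2
      exact ⟨dist a y, dist_nonneg, by rw [hinsert, ncard_insert_of_notMem haB (hfin r), hcard]⟩
  obtain ⟨r, hr, hcard⟩ := hclosedBall n
  obtain ⟨a, -, hra, hmin⟩ := exists_mem_dist_gt_forall_le hA hfin r
  have hball : A ∩ ball y (dist a y) = A ∩ closedBall y r := by
    ext b
    simp only [mem_inter_iff, mem_ball, mem_closedBall, and_congr_right_iff]
    exact fun hbA => ⟨fun hba => le_of_not_gt fun hrb => (hmin b hbA hrb).not_gt hba,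
      fun hbr => hbr.trans_lt hra⟩
  exact ⟨dist a y, hr.trans_lt hra, by rw [hball, hcard]⟩

theorem isClosed_of_inter_closedBall_finite (hfin : ∀ x, (A ∩ closedBall x 1).Finite) :
    IsClosed A := by
  refine isClosed_of_closure_subset fun x hx => ?_
  have hx' : x ∈ closure (ball x 1 ∩ A) := isOpen_ball.inter_closure ⟨mem_ball_self one_pos, hx⟩
  rw [((hfin x).subset fun b hb => ⟨hb.2, ball_subset_closedBall hb.1⟩).isClosed.closure_eq] at hx'
  exact hx'.2

theorem countable_of_inter_closedBall_finite (x : X) (hfin : ∀ n : ℕ, (A ∩ closedBall x n).Finite) :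
    A.Countable :=
  (countable_iUnion fun n => (hfin n).countable).mono fun a ha =>
    mem_iUnion_of_mem ⌈dist a x⌉₊ (mem_inter ha (mem_closedBall.mpr (Nat.le_ceil _)))

theorem dense_compl_of_inter_closedBall_finite [∀ x : X, (𝓝[≠] x).NeBot]
    (hfin : ∀ x, (A ∩ closedBall x 1).Finite) : Dense Aᶜ := by
  refine interior_eq_empty_iff_dense_compl.mp (eq_empty_of_forall_notMem fun x hx => ?_)
  exact infinite_of_mem_nhds x (inter_mem (mem_interior_iff_mem_nhds.mp hx)
    (closedBall_mem_nhds x one_pos)) (hfin x)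

theorem dense_setOf_injOn_dist [BaireSpace X] (hA : A.Countable)
    (h : ∀ a ∈ A, ∀ b ∈ A, a ≠ b → interior {y | dist a y = dist b y} = ∅) :
    Dense {y | InjOn (dist · y) A} := by
  let S : Set (X × X) := {p | p.1 ∈ A ∧ p.2 ∈ A ∧ p.1 ≠ p.2}
  have hS : S.Countable := (hA.prod hA).mono fun p hp => mk_mem_prod hp.1 hp.2.1
  have hdense : Dense (⋂ p ∈ S, {y | dist p.1 y = dist p.2 y}ᶜ) :=
    dense_biInter_of_isOpen (fun _ _ => (isClosed_eq (by fun_prop) (by fun_prop)).isOpen_compl) hS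
      fun p ⟨ha, hb, hab⟩ => interior_eq_empty_iff_dense_compl.mp (h _ ha _ hb hab)
  refine hdense.mono fun y hy a ha b hb hab => by_contra fun hne => ?_
  exact mem_iInter₂.mp hy (a, b) ⟨ha, hb, hne⟩ hab

end QuasiFinite

namespace SteinhausS'

variable {X : Type*} [NormedAddCommGroup X] [NormedSpace ℝ X]

theorem exists_norm_add_ne (hS' : SteinhausS' X) {u v : X} (huv : ‖u‖ = ‖v‖) (hne : u ≠ v)
    {δ : ℝ} (hδ : 0 < δ) : ∃ z : X, ‖z‖ < δ ∧ ‖u + z‖ ≠ ‖v + z‖ := by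
  have hu : 0 < ‖u‖ := by
    refine norm_pos_iff.mpr fun hu0 => hne ?_
    rw [hu0, eq_comm, ← norm_eq_zero, ← huv, hu0, norm_zero]
  set ρ := ‖u‖
  have hunit : ∀ w : X, ‖w‖ = ρ → ‖ρ⁻¹ • w‖ = 1 := fun w hw => by
    rw [norm_smul, norm_inv, Real.norm_of_nonneg hu.le, hw, inv_mul_cancel₀ hu.ne']
  have hscale : ∀ w z : X, ‖w + ρ • z‖ = ρ * ‖ρ⁻¹ • w + z‖ := fun w z => by
    have := norm_smul ρ (ρ⁻¹ • w + z)
    rwa [smul_add, smul_inv_smul₀ hu.ne', Real.norm_of_nonneg hu.le] at this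
  obtain ⟨z, hz, hsep⟩ := hS' _ _ (hunit u rfl) (hunit v huv.symm)
    ((smul_right_injective X (inv_ne_zero hu.ne')).ne hne) (δ / ρ) (div_pos hδ hu)
  refine ⟨ρ • z, ?_, fun heq => ?_⟩
  · rw [norm_smul, Real.norm_of_nonneg hu.le]
    exact (lt_div_iff₀' hu).mp hz
  · rw [hscale, hscale] at heq
    have := mul_left_cancel₀ hu.ne' heq
    rcases hsep with ⟨h₁, h₂⟩ | ⟨h₁, h₂⟩ <;> linarith

theorem interior_setOf_dist_eq (hS' : SteinhausS' X) {a b : X} (hab : a ≠ b) :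
    interior {y | dist a y = dist b y} = ∅ := by
  refine eq_empty_of_forall_notMem fun x hx => ?_
  obtain ⟨ε, hε, hball⟩ := Metric.isOpen_iff.mp isOpen_interior x hx
  have hx' : ‖x - a‖ = ‖x - b‖ := by
    simpa only [mem_ofPred_eq, dist_eq_norm'] using interior_subset hx
  obtain ⟨z, hz, hne⟩ := hS'.exists_norm_add_ne hx' (sub_right_injective.ne hab) hε
  have hxz : x + z ∈ ball x ε := by simpa using hz
  have heq := interior_subset (s := {y | dist a y = dist b y}) (hball hxz)
  rw [mem_ofPred_eq, dist_eq_norm', dist_eq_norm', ← sub_add_eq_add_sub, ← sub_add_eq_add_sub] at heq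
  exact hne heq

end SteinhausS'

theorem stmt7 {X : Type*} [NormedAddCommGroup X] [NormedSpace ℝ X] [CompleteSpace X]
    (hS' : SteinhausS' X) : SteinhausS X := by
  intro A hA hfin
  obtain ⟨a, -, b, -, hab⟩ := hA.nontrivial
  have : Nontrivial X := ⟨a, b, hab⟩
  refine ⟨Aᶜ ∩ {y | InjOn (dist · y) A}, ?_, ?_⟩
  · refine (dense_compl_of_inter_closedBall_finite (hfin · 1)).inter_of_isOpen_left ?_
      (isClosed_of_inter_closedBall_finite (hfin · 1)).isOpen_compl
    exact dense_setOf_injOn_dist (countable_of_inter_closedBall_finite 0 (hfin 0 ·))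
      fun a _ b _ hab => hS'.interior_setOf_dist_eq hab
  · rintro y ⟨hy, hinj⟩ n
    obtain ⟨r, hr, hcard⟩ := exists_ball_inter_ncard_eq hA (hfin y) hy hinj n
    exact ⟨r, hr, (hfin y r).subset (inter_subset_inter_right _ ball_subset_closedBall), hcard⟩
end

section
/- Every strictly convex Banach space has Steinhaus' property (S): for every quasi-finite set A there is a dense set Y such that for all y ∈ Y and n ∈ ℕ there is a ball centered at y containing exactly n points of A. -/
open Set Metric AffineMap Filter Topology

theorem Finset.exists_card_filter_lt_eq {α β : Type*} [LinearOrder β] (s : Finset α) (f : α → β)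
    (hf : InjOn f s) {n : ℕ} (hn : n < s.card) : ∃ a ∈ s, {x ∈ s | f x < f a}.card = n := by
  classical
  induction s using Finset.induction_on_max_value f generalizing n with
  | empty => simp at hn
  | insert a t hat hmax ih =>
    have hlt : ∀ x ∈ t, f x < f a := fun x hx => (hmax x hx).lt_of_ne fun h =>
      ne_of_mem_of_not_mem hx hat (hf (by simp [hx]) (by simp) h)
    rw [Finset.card_insert_of_notMem hat, Nat.lt_succ_iff, le_iff_lt_or_eq] at hn
    rcases hn with hn | rfl
    · obtain ⟨b, hbt, hb⟩ := ih (hf.mono (by simp)) hn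
      refine ⟨b, Finset.mem_insert_of_mem hbt, ?_⟩
      rwa [Finset.filter_insert, if_neg (hmax b hbt).not_gt]
    · refine ⟨a, Finset.mem_insert_self a t, ?_⟩
      rw [Finset.filter_insert, if_neg (lt_irrefl _), Finset.filter_true_of_mem hlt]

theorem exists_ncard_inter_ball_eq {α : Type*} [MetricSpace α] {A : Set α} {y : α}
    (hA : A.Infinite) (hfin : ∀ r, (A ∩ closedBall y r).Finite) (hy : y ∉ A)
    (hinj : InjOn (dist · y) A) (n : ℕ) :
    ∃ r > 0, (A ∩ ball y r).Finite ∧ (A ∩ ball y r).ncard = n := by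
  obtain ⟨t, htA, htcard⟩ := hA.exists_subset_card_eq (n + 1)
  obtain ⟨R, htR⟩ := t.finite_toSet.isBounded.subset_closedBall y
  set T := (hfin R).toFinset
  have hT : n < T.card := by
    have : t.card ≤ T.card := Finset.card_le_card fun x hx => by
      simpa [T] using And.intro (htA hx) (htR hx)
    omega
  obtain ⟨a, haT, hcard⟩ := T.exists_card_filter_lt_eq (dist · y)
    (hinj.mono fun x hx => by simp_all [T]) hT
  obtain ⟨haA, haR⟩ : a ∈ A ∧ dist a y ≤ R := by simpa [T] using haT
  have hball : A ∩ ball y (dist a y) = ↑{x ∈ T | dist x y < dist a y} := by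
    ext x
    simp only [mem_inter_iff, mem_ball, Finset.coe_filter, Finite.mem_toFinset, mem_closedBall,
      mem_ofPred_eq, T]
    exact ⟨fun h => ⟨⟨h.1, h.2.le.trans haR⟩, h.2⟩, fun h => ⟨h.1.1, h.2⟩⟩
  refine ⟨dist a y, dist_pos.2 (ne_of_mem_of_not_mem haA hy), ?_, ?_⟩ <;> rw [hball]
  · exact Finset.finite_toSet _
  · rw [ncard_coe_finset, hcard]

theorem dense_setOf_dist_ne {E P : Type*} [NormedAddCommGroup E] [NormedSpace ℝ E]
    [StrictConvexSpace ℝ E] [MetricSpace P] [NormedAddTorsor E P] {a b : P} (hab : a ≠ b) :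
    Dense {y | dist y a ≠ dist y b} := by
  intro y
  obtain hy | hy := ne_or_eq (dist y a) (dist y b)
  · exact subset_closure hy
  have hseg : ∀ s ∈ Ioo (0 : ℝ) 1, dist (lineMap y a s) a ≠ dist (lineMap y a s) b := by
    intro s ⟨hs0, hs1⟩ heq
    have h : lineMap y a s = lineMap y b s := by
      apply eq_lineMap_of_dist_eq_mul_of_dist_eq_mul
      · rw [dist_left_lineMap, Real.norm_of_nonneg hs0.le, hy]
      · rw [← heq, dist_lineMap_right, Real.norm_of_nonneg (by linarith), hy]
    rw [lineMap_apply, lineMap_apply, vadd_right_cancel_iff, smul_right_inj hs0.ne',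
      vsub_left_cancel_iff] at h
    exact hab h
  have hlim : Tendsto (fun s : ℝ => lineMap y a s) (𝓝[>] 0) (𝓝 y) := by
    simpa using (lineMap_continuous (R := ℝ) (p := y) (q := a)).continuousWithinAt
      (s := Ioi 0) (x := 0) |>.tendsto
  exact mem_closure_of_tendsto hlim (eventually_of_mem (Ioo_mem_nhdsGT one_pos) hseg)

theorem dense_setOf_notMem_injOn_dist {E : Type*} [NormedAddCommGroup E] [NormedSpace ℝ E]
    [StrictConvexSpace ℝ E] [Nontrivial E] [BaireSpace E] {A : Set E} (hA : A.Countable) :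
    Dense {y | y ∉ A ∧ InjOn (dist · y) A} := by
  have hopen : ∀ p ∈ A.offDiag, IsOpen {y : E | dist y p.1 ≠ dist y p.2} := fun p _ =>
    isOpen_ne_fun (by fun_prop) (by fun_prop)
  have hoff : A.offDiag.Countable := (hA.prod hA).mono A.offDiag_subset_prod
  refine Dense.mono ?_ <| Dense.inter_of_Gδ hA.isGδ_compl (.biInter_of_isOpen hoff hopen)
    (hA.dense_compl ℝ) (dense_biInter_of_isOpen hopen hoff fun p hp => dense_setOf_dist_ne hp.2.2)
  rintro y ⟨hyA, hy⟩
  refine ⟨hyA, fun a ha b hb hab => by_contra fun hne => ?_⟩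
  exact mem_iInter₂.1 hy (a, b) ⟨ha, hb, hne⟩ (by simpa [dist_comm] using hab)

theorem stmt8 {X : Type*} [NormedAddCommGroup X] [NormedSpace ℝ X] [CompleteSpace X]
    (hsc : ∀ x y : X, x ≠ y → ‖x‖ = 1 → ‖y‖ = 1 →
      ∀ t : ℝ, 0 < t → t < 1 → ‖t • x + (1 - t) • y‖ < 1) :
    SteinhausS X := by
  have : StrictConvexSpace ℝ X := .of_norm_combo_lt_one fun x y hx hy hxy =>
    ⟨1 / 2, 1 - 1 / 2, add_sub_cancel _ _, hsc x y hxy hx hy _ one_half_pos one_half_lt_one⟩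
  intro A hA hAfin
  obtain ⟨a, -, b, -, hab⟩ := hA.nontrivial
  have : Nontrivial X := ⟨a, b, hab⟩
  have hAc : A.Countable := by
    rw [← iUnion_inter_closedBall_nat A 0]
    exact countable_iUnion fun n => (hAfin 0 n).countable
  exact ⟨_, dense_setOf_notMem_injOn_dist hAc,
    fun y hy n => exists_ncard_inter_ball_eq hA (hAfin y) hy.1 hy.2 n⟩
end

section
/- Every Hilbert space satisfies property (S'): for all unit vectors x ≠ y and every δ > 0 there exists z with ‖z‖ < δ such that one of ‖x+z‖, ‖y+z‖ exceeds 1 and the other is less than 1. -/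
/-!
Move both unit vectors by the same small multiple `z = t • (x - y)` of their difference, `0 < t < 1`.
Both translates lie on the line through `x` and `y`: `y + z` strictly inside the chord `[y, x]` of the
unit sphere and `x + z` beyond `x`. In an inner product space the squared norm along that line is the
parabola `s ↦ ‖y‖ ^ 2 + (s ^ 2 - s) * ‖x - y‖ ^ 2`, which is below `‖y‖ ^ 2` exactly on `(0, 1)`.
-/

section ChordOfSphere

variable {E : Type*} [NormedAddCommGroup E] [InnerProductSpace ℝ E] {x y : E}

theorem norm_add_smul_sub_sq_of_norm_eq (h : ‖x‖ = ‖y‖) (s : ℝ) :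
    ‖y + s • (x - y)‖ ^ 2 = ‖y‖ ^ 2 + (s ^ 2 - s) * ‖x - y‖ ^ 2 := by
  have hinner : 2 * inner ℝ y (x - y) = -‖x - y‖ ^ 2 := by
    rw [inner_sub_right, real_inner_self_eq_norm_sq, norm_sub_sq_real, h, real_inner_comm]
    ring
  rw [norm_add_sq_real, real_inner_smul_right, norm_smul, mul_pow, Real.norm_eq_abs, sq_abs]
  linear_combination s * hinner

theorem norm_add_smul_sub_lt_of_norm_eq (h : ‖x‖ = ‖y‖) (hxy : x ≠ y) {s : ℝ}
    (hs₀ : 0 < s) (hs₁ : s < 1) : ‖y + s • (x - y)‖ < ‖y‖ := by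
  have hpos : 0 < ‖x - y‖ ^ 2 := by positivity [sub_ne_zero.mpr hxy]
  refine lt_of_pow_lt_pow_left₀ 2 (norm_nonneg y) ?_
  have hs : s ^ 2 - s < 0 := by nlinarith
  rw [norm_add_smul_sub_sq_of_norm_eq h]
  linarith [mul_neg_of_neg_of_pos hs hpos]

theorem norm_lt_norm_add_smul_sub_of_norm_eq (h : ‖x‖ = ‖y‖) (hxy : x ≠ y) {s : ℝ}
    (hs : 1 < s) : ‖y‖ < ‖y + s • (x - y)‖ := by
  have hpos : 0 < ‖x - y‖ ^ 2 := by positivity [sub_ne_zero.mpr hxy]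
  refine lt_of_pow_lt_pow_left₀ 2 (norm_nonneg _) ?_
  have hs : 0 < s ^ 2 - s := by nlinarith
  rw [norm_add_smul_sub_sq_of_norm_eq h]
  linarith [mul_pos hs hpos]

end ChordOfSphere

theorem stmt9_general {X : Type*} [NormedAddCommGroup X] [InnerProductSpace ℝ X] :
    ∀ x y : X, ‖x‖ = 1 → ‖y‖ = 1 → x ≠ y → ∀ δ : ℝ, 0 < δ →
      ∃ z : X, ‖z‖ < δ ∧
        ((1 < ‖x + z‖ ∧ ‖y + z‖ < 1) ∨ (‖x + z‖ < 1 ∧ 1 < ‖y + z‖)) := by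
  intro x y hx hy hxy δ hδ
  have hnorm : ‖x‖ = ‖y‖ := hx.trans hy.symm
  set t := δ / (δ + ‖x - y‖)
  have ht₀ : 0 < t := by positivity
  have ht₁ : t < 1 := (div_lt_one (by positivity)).2 (by simpa using sub_ne_zero.mpr hxy)
  refine ⟨t • (x - y), ?_, Or.inl ⟨?_, ?_⟩⟩
  · rw [norm_smul, Real.norm_of_nonneg ht₀.le, div_mul_eq_mul_div, div_lt_iff₀ (by positivity)]
    nlinarith
  · have hline : x + t • (x - y) = y + (1 + t) • (x - y) := by module
    rw [hline, ← hy]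
    exact norm_lt_norm_add_smul_sub_of_norm_eq hnorm hxy (by linarith)
  · rw [← hy]
    exact norm_add_smul_sub_lt_of_norm_eq hnorm hxy ht₀ ht₁

theorem stmt9 {X : Type*} [NormedAddCommGroup X] [InnerProductSpace ℝ X]
    [CompleteSpace X] :
    ∀ x y : X, ‖x‖ = 1 → ‖y‖ = 1 → x ≠ y → ∀ δ : ℝ, 0 < δ →
      ∃ z : X, ‖z‖ < δ ∧
        ((1 < ‖x + z‖ ∧ ‖y + z‖ < 1) ∨ (‖x + z‖ < 1 ∧ 1 < ‖y + z‖)) :=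
  stmt9_general
end

section
/- The space ℓ∞² = ℝ² with the supremum norm fails property (S'): there exist unit vectors x ≠ y and δ > 0 such that for every z with ‖z‖ < δ, it is not the case that exactly one of ‖x+z‖, ‖y+z‖ is greater than 1 and the other less than 1. -/
lemma aux_norm_eq (c : ℝ) (hc01 : |c| ≤ 1) (v : Fin 2 → ℝ) (hv0 : v 0 = c) (hv1 : v 1 = 1) :
    ‖v‖ = 1 := by
  apply le_antisymm
  · apply (pi_norm_le_iff_of_nonneg zero_le_one).2
    intro i
    fin_cases i
    · simpa [hv0, Real.norm_eq_abs] using hc01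
    · simp [hv1]
  · calc (1:ℝ) = ‖v 1‖ := by simp [hv1]
    _ ≤ ‖v‖ := norm_le_pi_norm v 1

lemma aux_norm_add (c : ℝ) (z : Fin 2 → ℝ) (hc : |c| ≤ 1/2)
    (ha : -(1/4) < z 0) (ha2 : z 0 < 1/4) (hb : -(1/4) < z 1) (hb2 : z 1 < 1/4) :
    ‖![c, 1] + z‖ = 1 + z 1 := by
  have hc' := abs_le.1 hc
  apply le_antisymm
  · apply (pi_norm_le_iff_of_nonneg (by linarith)).2
    intro i
    fin_cases i
    · show ‖c + z 0‖ ≤ 1 + z 1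
      rw [Real.norm_eq_abs, abs_le]
      constructor <;> linarith [hc'.1, hc'.2]
    · show ‖1 + z 1‖ ≤ 1 + z 1
      rw [Real.norm_eq_abs, abs_of_nonneg (by linarith)]
  · calc 1 + z 1 = ‖(![c, 1] + z) 1‖ := by
          show _ = ‖1 + z 1‖
          rw [Real.norm_eq_abs, abs_of_nonneg (by linarith)]
    _ ≤ _ := norm_le_pi_norm _ 1

/-- `ℝ²` with the supremum norm (the `Pi` norm on `Fin 2 → ℝ`) fails property (S'). -/
theorem stmt10 :
    ∃ (x y : Fin 2 → ℝ) (δ : ℝ), ‖x‖ = 1 ∧ ‖y‖ = 1 ∧ x ≠ y ∧ 0 < δ ∧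
      ∀ z : Fin 2 → ℝ, ‖z‖ < δ →
        ¬((1 < ‖x + z‖ ∧ ‖y + z‖ < 1) ∨ (‖x + z‖ < 1 ∧ 1 < ‖y + z‖)) := by
  refine ⟨![0, 1], ![1/2, 1], 1/4, ?_, ?_, ?_, by norm_num, ?_⟩
  · exact aux_norm_eq 0 (by norm_num) _ (by simp) (by simp)
  · exact aux_norm_eq (1/2) (by rw [abs_of_nonneg] <;> norm_num) _ (by simp) (by simp)
  · intro h
    have := congrFun h 0
    simp at this
  · intro z hz h
    have ha : |z 0| < 1/4 := lt_of_le_of_lt (by simpa [Real.norm_eq_abs] using norm_le_pi_norm z 0) hz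
    have hb : |z 1| < 1/4 := lt_of_le_of_lt (by simpa [Real.norm_eq_abs] using norm_le_pi_norm z 1) hz
    have ha' := abs_lt.1 ha
    have hb' := abs_lt.1 hb
    have hx : ‖![0,1] + z‖ = 1 + z 1 :=
      aux_norm_add 0 z (by norm_num) ha'.1 ha'.2 hb'.1 hb'.2
    have hy : ‖![1/2,1] + z‖ = 1 + z 1 :=
      aux_norm_add (1/2) z (by rw [abs_of_nonneg] <;> norm_num) ha'.1 ha'.2 hb'.1 hb'.2
    rw [hx, hy] at h
    rcases h with ⟨h1, h2⟩ | ⟨h1, h2⟩ <;> linarith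
end

section
/- If K is a compact Hausdorff space with at least two points, then the Banach space C(K) of continuous real-valued functions with the supremum norm fails property (S'). -/
theorem stmt11 {K : Type*} [TopologicalSpace K] [CompactSpace K] [T2Space K]
    (hK : ∃ u v : K, u ≠ v) :
    ¬ SteinhausS' C(K, ℝ) := by
  intro hS
  obtain ⟨u, v, huv⟩ := hK
  obtain ⟨g, hgv, hgu, hg01⟩ := exists_continuous_zero_one_of_isClosed
    (isClosed_singleton (x := v)) (isClosed_singleton (x := u))
    (by simpa using huv.symm)
  have hgu1 : g u = 1 := hgu rfl
  have hgv0 : g v = 0 := hgv rfl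
  set f : C(K, ℝ) := g ⊔ ContinuousMap.const K (1/2) with hf_def
  have hfx : ∀ x, f x = max (g x) (1/2) := fun x => rfl
  have hg0 : ∀ x, 0 ≤ g x := fun x => (hg01 x).1
  have hg1 : ∀ x, g x ≤ 1 := fun x => (hg01 x).2
  have hfle : ∀ x, ‖f x‖ ≤ 1 := by
    intro x
    rw [hfx, Real.norm_eq_abs, abs_le]
    constructor
    · nlinarith [hg0 x, le_max_left (g x) (1/2)]
    · exact max_le (hg1 x) (by norm_num)
  have hnf : ‖f‖ = 1 := by
    refine le_antisymm ((ContinuousMap.norm_le _ zero_le_one).mpr hfle) ?_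
    calc (1:ℝ) = ‖f u‖ := by rw [hfx, hgu1]; norm_num
      _ ≤ ‖f‖ := f.norm_coe_le_norm u
  have hng : ‖g‖ = 1 := by
    refine le_antisymm ((ContinuousMap.norm_le _ zero_le_one).mpr ?_) ?_
    · intro x; rw [Real.norm_eq_abs, abs_le]; exact ⟨by linarith [hg0 x], hg1 x⟩
    · calc (1:ℝ) = ‖g u‖ := by rw [hgu1]; norm_num
        _ ≤ ‖g‖ := g.norm_coe_le_norm u
  have hne : f ≠ g := by
    intro h
    have := ContinuousMap.congr_fun h v
    rw [hfx, hgv0] at this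
    norm_num at this
  obtain ⟨z, hz, hcase⟩ := hS f g hnf hng hne (1/2) (by norm_num)
  have hzx : ∀ x, |z x| < 1/2 := fun x => by
    have := z.norm_coe_le_norm x
    rw [Real.norm_eq_abs] at this; linarith
  -- from 1 < ‖w‖ get a point
  have key : ∀ (w : C(K, ℝ)), 1 < ‖w‖ → ∃ x, 1 < |w x| := by
    intro w hw
    by_contra h
    push_neg at h
    have : ‖w‖ ≤ 1 := (ContinuousMap.norm_le _ zero_le_one).mpr
      (fun x => by rw [Real.norm_eq_abs]; exact h x)
    linarith
  rcases hcase with ⟨h1, h2⟩ | ⟨h1, h2⟩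
  · obtain ⟨x, hx⟩ := key _ h1
    have hfz : (f + z) x = f x + z x := rfl
    rw [hfz] at hx
    have hf0 : 0 ≤ f x := by rw [hfx]; positivity
    have hzlb : -(1/2:ℝ) < z x := (abs_lt.mp (hzx x)).1
    have hpos : 1 < f x + z x := by
      rcases lt_abs.mp hx with h | h
      · exact h
      · linarith
    have hgfx : g x = f x := by
      have hhalf : (1/2:ℝ) < f x := by
        have := (abs_lt.mp (hzx x)).2
        linarith
      rw [hfx] at hhalf ⊢
      have : (1/2:ℝ) < g x := by
        rcases lt_max_iff.mp hhalf with h | h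
        · exact h
        · linarith
      exact (max_eq_left this.le).symm
    have : 1 < |(g + z) x| := by
      have : (g + z) x = g x + z x := rfl
      rw [this, hgfx]
      exact lt_of_lt_of_le hpos (le_abs_self _)
    have : 1 < ‖g + z‖ := lt_of_lt_of_le this (by
      rw [← Real.norm_eq_abs]; exact (g + z).norm_coe_le_norm x)
    linarith
  · obtain ⟨x, hx⟩ := key _ h2
    have hgz : (g + z) x = g x + z x := rfl
    rw [hgz] at hx
    have hpos : 1 < g x + z x := by
      rcases lt_abs.mp hx with h | h
      · exact h
      · have := hzx x
        have := hg0 x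
        cases abs_lt.mp (hzx x); linarith
    have hfge : g x ≤ f x := by rw [hfx]; exact le_max_left _ _
    have : 1 < |(f + z) x| := by
      have hfz : (f + z) x = f x + z x := rfl
      rw [hfz]
      exact lt_of_lt_of_le (by linarith) (le_abs_self _)
    have : 1 < ‖f + z‖ := lt_of_lt_of_le this (by
      rw [← Real.norm_eq_abs]; exact (f + z).norm_coe_le_norm x)
    linarith
end

section
/- Let f, g ∈ C(K) with 0 ≤ g(x) ≤ f(x) ≤ 1 for all x, f attaining the value 1, and f ≠ g. Then for every h ∈ C(K) with ‖h‖∞ < 1/2, the inequality ‖g + h‖∞ > 1 implies ‖f + h‖∞ > 1, and ‖f + h‖∞ < 1 implies ‖g + h‖∞ < 1; hence the pair f, g witnesses the failure of (S') in C(K). -/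
theorem stmt12 {K : Type*} [TopologicalSpace K] [CompactSpace K] [T2Space K]
    (f g : C(K, ℝ)) (hg0 : ∀ x, 0 ≤ g x) (hgf : ∀ x, g x ≤ f x) (hf1 : ∀ x, f x ≤ 1)
    (hattain : ∃ x, f x = 1) (hfg : f ≠ g) :
    ∀ h : C(K, ℝ), ‖h‖ < 1 / 2 →
      (1 < ‖g + h‖ → 1 < ‖f + h‖) ∧ (‖f + h‖ < 1 → ‖g + h‖ < 1) := by
  intro h hh
  constructor
  · intro hgh
    by_contra hle
    push_neg at hle
    have hx : ∃ x, 1 < |g x + h x| := by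
      by_contra hall
      push_neg at hall
      have : ‖g + h‖ ≤ 1 := by
        apply ContinuousMap.norm_le _ zero_le_one |>.mpr
        intro x
        simpa [Real.norm_eq_abs] using hall x
      linarith
    obtain ⟨x, hx⟩ := hx
    have hhx : |h x| ≤ ‖h‖ := by
      simpa [Real.norm_eq_abs] using (h.norm_coe_le_norm x)
    have h1 : -(1/2) < h x := by
      have := abs_le.mp hhx
      linarith
    have h2 : 1 < g x + h x := by
      rcases lt_abs.mp hx with h' | h'
      · exact h'
      · exfalso; linarith [hg0 x]
    have h3 : 1 < f x + h x := by linarith [hgf x]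
    have : f x + h x ≤ ‖f + h‖ := by
      have := (f + h).norm_coe_le_norm x
      simp only [ContinuousMap.add_apply, Real.norm_eq_abs] at this
      exact le_trans (le_abs_self _) this
    linarith
  · intro hfh
    have hbound : ∀ x, |g x + h x| ≤ max ‖f + h‖ (1/2) := by
      intro x
      have hhx : |h x| ≤ ‖h‖ := by
        simpa [Real.norm_eq_abs] using (h.norm_coe_le_norm x)
      have habs := abs_le.mp hhx
      have hup : f x + h x ≤ ‖f + h‖ := by
        have := (f + h).norm_coe_le_norm x
        simp only [ContinuousMap.add_apply, Real.norm_eq_abs] at this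
        exact le_trans (le_abs_self _) this
      rw [abs_le]
      constructor
      · have : -(1/2) ≤ g x + h x := by linarith [hg0 x, hh]
        calc -(max ‖f + h‖ (1/2)) ≤ -(1/2) := by
              simp [neg_le_neg_iff]
            _ ≤ g x + h x := this
      · calc g x + h x ≤ f x + h x := by linarith [hgf x]
          _ ≤ ‖f + h‖ := hup
          _ ≤ max ‖f + h‖ (1/2) := le_max_left _ _
    have : ‖g + h‖ ≤ max ‖f + h‖ (1/2) := by
      apply ContinuousMap.norm_le _ (le_max_of_le_right (by norm_num)) |>.mpr
      intro x
      simpa [Real.norm_eq_abs] using hbound x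
    have : max ‖f + h‖ (1/2) < 1 := max_lt hfh (by norm_num)
    linarith
end

section
/- For every atomless measure space (Ω, Σ, μ) with μ semi-finite and every 1 ≤ p < ∞, the space Lᵖ(μ) satisfies property (S'): for all unit vectors f ≠ g and δ > 0 there exists h with ‖h‖ₚ < δ such that one of ‖f+h‖ₚ, ‖g+h‖ₚ is > 1 and the other is < 1. -/
open MeasureTheory ENNReal

/-!
If `f ≠ g`, some nonzero `t` lies strictly between `f` and `g` on a set `B` of positive finite
measure (semi-finiteness), say `f < t < g` with `t > 0`. Adding `h = -2t · 𝟙_C` for a subset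
`C ⊆ B` reflects the values on `C` about `t`: there `|f - 2t| > |f|` and `|g - 2t| < |g|`, while
nothing changes off `C`. So `‖f + h‖ > ‖f‖` and `‖g + h‖ < ‖g‖`, and since `μ` is atomless `C`
can be taken of positive but arbitrarily small measure, making `‖h‖` small.
-/

theorem abs_lt_abs_sub_two_mul_of_lt {x t : ℝ} (ht : 0 < t) (hx : x < t) :
    |x| < |x - 2 * t| := by
  rcases abs_cases x with ⟨h, hs⟩ | ⟨h, hs⟩ <;>
    rcases abs_cases (x - 2 * t) with ⟨h', hs'⟩ | ⟨h', hs'⟩ <;> linarith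

theorem abs_sub_two_mul_lt_abs_of_lt {x t : ℝ} (ht : 0 < t) (hx : t < x) :
    |x - 2 * t| < |x| := by
  rcases abs_cases x with ⟨h, hs⟩ | ⟨h, hs⟩ <;>
    rcases abs_cases (x - 2 * t) with ⟨h', hs'⟩ | ⟨h', hs'⟩ <;> linarith

namespace MeasureTheory.Measure

variable {Ω : Type*} [MeasurableSpace Ω]

def IsAtomless (μ : Measure Ω) : Prop :=
  ∀ s : Set Ω, MeasurableSet s → 0 < μ s → ∃ t ⊆ s, MeasurableSet t ∧ 0 < μ t ∧ μ t < μ s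

def IsSemiFinite (μ : Measure Ω) : Prop :=
  ∀ s : Set Ω, MeasurableSet s → μ s = ∞ → ∃ t ⊆ s, MeasurableSet t ∧ 0 < μ t ∧ μ t < ∞

variable {μ : Measure Ω}

theorem IsAtomless.exists_subset_two_mul_le (hμ : μ.IsAtomless) {s : Set Ω}
    (hs : MeasurableSet s) (h0 : 0 < μ s) :
    ∃ t ⊆ s, MeasurableSet t ∧ 0 < μ t ∧ 2 * μ t ≤ μ s := by
  obtain ⟨t, hts, ht, ht0, hlt⟩ := hμ s hs h0
  have hsplit : μ t + μ (s \ t) = μ s := by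
    rw [measure_add_sdiff ht.nullMeasurableSet, Set.union_eq_self_of_subset_left hts]
  rcases le_total (μ t) (μ (s \ t)) with hle | hle
  · exact ⟨t, hts, ht, ht0, by rw [two_mul, ← hsplit]; gcongr⟩
  · refine ⟨s \ t, Set.sdiff_subset, hs.diff ht, ?_, by rw [two_mul, ← hsplit]; gcongr⟩
    refine pos_iff_ne_zero.2 fun h => hlt.ne ?_
    rw [← hsplit, h, add_zero]

theorem IsAtomless.exists_subset_measure_lt (hμ : μ.IsAtomless) {s : Set Ω}
    (hs : MeasurableSet s) (h0 : 0 < μ s) (hfin : μ s ≠ ∞) {ε : ℝ≥0∞} (hε : 0 < ε) :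
    ∃ t ⊆ s, MeasurableSet t ∧ 0 < μ t ∧ μ t < ε := by
  have halving : ∀ n : ℕ, ∃ t ⊆ s, MeasurableSet t ∧ 0 < μ t ∧ 2 ^ n * μ t ≤ μ s := by
    intro n
    induction n with
    | zero => exact ⟨s, subset_rfl, hs, h0, by simp⟩
    | succ n ih =>
      obtain ⟨t, hts, ht, ht0, htle⟩ := ih
      obtain ⟨u, hut, hu, hu0, hule⟩ := hμ.exists_subset_two_mul_le ht ht0
      refine ⟨u, hut.trans hts, hu, hu0, ?_⟩
      calc 2 ^ (n + 1) * μ u = 2 ^ n * (2 * μ u) := by rw [pow_succ, mul_assoc]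
        _ ≤ 2 ^ n * μ t := by gcongr
        _ ≤ μ s := htle
  obtain ⟨n, hn⟩ := ENNReal.exists_nat_mul_gt hε.ne' hfin
  obtain ⟨t, hts, ht, ht0, htle⟩ := halving n
  refine ⟨t, hts, ht, ht0, ?_⟩
  have h2n : (n : ℝ≥0∞) ≤ 2 ^ n := by exact_mod_cast (Nat.lt_two_pow_self).le
  have : 2 ^ n * μ t < 2 ^ n * ε := htle.trans_lt (hn.trans_le (by gcongr))
  exact (ENNReal.mul_lt_mul_iff_right (by simp) (by simp)).1 this

theorem IsSemiFinite.exists_subset_measure_pos_lt_top (hμ : μ.IsSemiFinite) {s : Set Ω}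
    (hs : MeasurableSet s) (h0 : μ s ≠ 0) :
    ∃ t ⊆ s, MeasurableSet t ∧ 0 < μ t ∧ μ t < ∞ := by
  by_cases htop : μ s = ∞
  · exact hμ s hs htop
  · exact ⟨s, subset_rfl, hs, pos_iff_ne_zero.2 h0, lt_top_iff_ne_top.2 htop⟩

theorem IsSemiFinite.exists_subset_forall_lt_lt (hμ : μ.IsSemiFinite) {F G : Ω → ℝ}
    (hF : Measurable F) (hG : Measurable G) (h : ¬ G ≤ᵐ[μ] F) :
    ∃ t : ℝ, t ≠ 0 ∧ ∃ B : Set Ω, MeasurableSet B ∧ 0 < μ B ∧ μ B < ∞ ∧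
      ∀ ω ∈ B, F ω < t ∧ t < G ω := by
  -- `t = 0` must be avoided: the perturbation `-2t · 𝟙_C` would vanish.
  set D : Set ℝ := Set.range ((↑) : ℚ → ℝ) \ {0}
  have hDc : D.Countable := (Set.countable_range _).mono Set.sdiff_subset
  have hDd : Dense D := Rat.denseRange_cast.sdiff_singleton 0
  obtain ⟨t, htD, ht⟩ : ∃ t ∈ D, μ {ω | F ω < t ∧ t < G ω} ≠ 0 := by
    by_contra! hnull
    refine h ?_
    filter_upwards [(ae_ball_iff hDc).2 fun t ht => measure_eq_zero_iff_ae_notMem.1 (hnull t ht)]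
      with ω hω
    by_contra! hlt
    obtain ⟨t, ht, hbetween⟩ := hDd.exists_between hlt
    exact hω t ht hbetween
  have hmeas : MeasurableSet {ω | F ω < t ∧ t < G ω} :=
    (measurableSet_lt hF measurable_const).inter (measurableSet_lt measurable_const hG)
  obtain ⟨B, hBs, hB, hB0, hBfin⟩ := hμ.exists_subset_measure_pos_lt_top hmeas ht
  exact ⟨t, htD.2, B, hB, hB0, hBfin, fun ω hω => hBs hω⟩

theorem IsAtomless.exists_indicatorConstLp_norm_lt {E : Type*} [NormedAddCommGroup E]
    (hμ : μ.IsAtomless) {p : ℝ≥0∞} (hp0 : p ≠ 0) (hp : p ≠ ∞) {B : Set Ω}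
    (hB : MeasurableSet B) (h0 : 0 < μ B) (hfin : μ B ≠ ∞) (c : E) {δ : ℝ} (hδ : 0 < δ) :
    ∃ C ⊆ B, ∃ (hC : MeasurableSet C) (hCfin : μ C ≠ ∞),
      0 < μ C ∧ ‖indicatorConstLp p hC hCfin c‖ < δ := by
  have hq : 0 < p.toReal := ENNReal.toReal_pos hp0 hp
  set r : ℝ := δ / (‖c‖ + 1)
  have hr : 0 < r := by positivity
  obtain ⟨C, hCB, hC, hC0, hCε⟩ :=
    hμ.exists_subset_measure_lt hB h0 hfin (ENNReal.ofReal_pos.2 (Real.rpow_pos_of_pos hr p.toReal))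
  have hCfin : μ C ≠ ∞ := (hCε.trans ENNReal.ofReal_lt_top).ne
  refine ⟨C, hCB, hC, hCfin, hC0, ?_⟩
  have hCr : (μ C).toReal ^ (1 / p.toReal) < r := by
    have := Real.rpow_lt_rpow ENNReal.toReal_nonneg
      ((ENNReal.lt_ofReal_iff_toReal_lt hCfin).1 hCε) (one_div_pos.2 hq)
    rwa [← Real.rpow_mul hr.le, mul_one_div_cancel hq.ne', Real.rpow_one] at this
  rw [norm_indicatorConstLp hp0 hp]
  calc ‖c‖ * (μ C).toReal ^ (1 / p.toReal)
      ≤ (‖c‖ + 1) * (μ C).toReal ^ (1 / p.toReal) := by gcongr; linarith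
    _ < (‖c‖ + 1) * r := by gcongr
    _ = δ := by simp only [r]; field_simp

end MeasureTheory.Measure

namespace MeasureTheory.Lp

variable {Ω E : Type*} [MeasurableSpace Ω] {μ : Measure Ω} [NormedAddCommGroup E] {p : ℝ≥0∞}

theorem norm_lt_norm_of_ae_eq_off_of_ae_lt_on (hp0 : p ≠ 0) (hp : p ≠ ∞) {u v : Lp E p μ}
    {C : Set Ω} (hC : μ C ≠ 0) (heq : ∀ᵐ ω ∂μ, ω ∉ C → u ω = v ω)
    (hlt : ∀ᵐ ω ∂μ, ω ∈ C → ‖u ω‖ < ‖v ω‖) : ‖u‖ < ‖v‖ := by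
  have hq : 0 < p.toReal := ENNReal.toReal_pos hp0 hp
  rw [Lp.norm_def, Lp.norm_def, ENNReal.toReal_lt_toReal (Lp.eLpNorm_ne_top u)
    (Lp.eLpNorm_ne_top v), eLpNorm_eq_lintegral_rpow_enorm_toReal hp0 hp,
    eLpNorm_eq_lintegral_rpow_enorm_toReal hp0 hp]
  refine ENNReal.rpow_lt_rpow ?_ (one_div_pos.2 hq)
  refine lintegral_strict_mono_of_ae_le_of_ae_lt_on
    ((Lp.aestronglyMeasurable v).enorm.pow_const _)
    (lintegral_rpow_enorm_lt_top_of_eLpNorm_lt_top hp0 hp (Lp.eLpNorm_lt_top u)).ne ?_ hC ?_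
  · filter_upwards [heq, hlt] with ω hωeq hωlt
    by_cases hω : ω ∈ C
    · exact ENNReal.rpow_le_rpow (enorm_le_iff_norm_le.2 (hωlt hω).le) hq.le
    · rw [hωeq hω]
  · filter_upwards [hlt] with ω hωlt hω
    exact ENNReal.rpow_lt_rpow ((lt_iff_lt_of_le_iff_le enorm_le_iff_norm_le).2 (hωlt hω)) hq

variable [Fact (1 ≤ p)]

theorem exists_perturbation_of_pos_of_lt_lt_on (hμ : μ.IsAtomless) (hp : p ≠ ∞)
    {f g : Lp ℝ p μ} {t : ℝ} (ht : 0 < t) {B : Set Ω} (hB : MeasurableSet B) (h0 : 0 < μ B)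
    (hfin : μ B ≠ ∞) (hfg : ∀ᵐ ω ∂μ, ω ∈ B → f ω < t ∧ t < g ω) {δ : ℝ} (hδ : 0 < δ) :
    ∃ h : Lp ℝ p μ, ‖h‖ < δ ∧ ‖f‖ < ‖f + h‖ ∧ ‖g + h‖ < ‖g‖ := by
  have hp0 : p ≠ 0 := (zero_lt_one.trans_le Fact.out).ne'
  obtain ⟨C, hCB, hC, hCfin, hC0, hh⟩ :=
    hμ.exists_indicatorConstLp_norm_lt hp0 hp hB h0 hfin (-(2 * t)) hδ
  set h := indicatorConstLp p hC hCfin (-(2 * t))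
  have hcoe (u : Lp ℝ p μ) : ∀ᵐ ω ∂μ, (u + h) ω = u ω + C.indicator (fun _ => -(2 * t)) ω := by
    filter_upwards [Lp.coeFn_add u h, indicatorConstLp_coeFn (c := -(2 * t)) (hs := hC)
      (hμs := hCfin)] with ω h₁ h₂
    rw [h₁, Pi.add_apply, h₂]
  have hoff (u : Lp ℝ p μ) : ∀ᵐ ω ∂μ, ω ∉ C → (u + h) ω = u ω := by
    filter_upwards [hcoe u] with ω hω hωC
    rw [hω, Set.indicator_of_notMem hωC, add_zero]
  have hon (u : Lp ℝ p μ) : ∀ᵐ ω ∂μ, ω ∈ C → ‖(u + h) ω‖ = |u ω - 2 * t| := by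
    filter_upwards [hcoe u] with ω hω hωC
    rw [hω, Set.indicator_of_mem hωC, ← sub_eq_add_neg, Real.norm_eq_abs]
  refine ⟨h, hh, ?_, ?_⟩
  · refine norm_lt_norm_of_ae_eq_off_of_ae_lt_on hp0 hp hC0.ne'
      ((hoff f).mono fun ω hω hωC => (hω hωC).symm) ?_
    filter_upwards [hon f, hfg] with ω hω hωB hωC
    rw [hω hωC, Real.norm_eq_abs]
    exact abs_lt_abs_sub_two_mul_of_lt ht (hωB (hCB hωC)).1
  · refine norm_lt_norm_of_ae_eq_off_of_ae_lt_on hp0 hp hC0.ne' (hoff g) ?_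
    filter_upwards [hon g, hfg] with ω hω hωB hωC
    rw [hω hωC, Real.norm_eq_abs]
    exact abs_sub_two_mul_lt_abs_of_lt ht (hωB (hCB hωC)).2

theorem exists_perturbation_of_lt_lt_on (hμ : μ.IsAtomless) (hp : p ≠ ∞)
    {f g : Lp ℝ p μ} {t : ℝ} (ht : t ≠ 0) {B : Set Ω} (hB : MeasurableSet B) (h0 : 0 < μ B)
    (hfin : μ B ≠ ∞) (hfg : ∀ᵐ ω ∂μ, ω ∈ B → f ω < t ∧ t < g ω) {δ : ℝ} (hδ : 0 < δ) :
    ∃ h : Lp ℝ p μ, ‖h‖ < δ ∧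
      ((‖f‖ < ‖f + h‖ ∧ ‖g + h‖ < ‖g‖) ∨ (‖f + h‖ < ‖f‖ ∧ ‖g‖ < ‖g + h‖)) := by
  rcases ht.lt_or_gt with hneg | hpos
  · have hgf : ∀ᵐ ω ∂μ, ω ∈ B → (-g) ω < -t ∧ -t < (-f) ω := by
      filter_upwards [Lp.coeFn_neg f, Lp.coeFn_neg g, hfg] with ω hf hg hω hωB
      rw [hf, hg, Pi.neg_apply, Pi.neg_apply, neg_lt_neg_iff, neg_lt_neg_iff]
      exact (hω hωB).symm
    obtain ⟨h, hh, hg, hf⟩ :=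
      exists_perturbation_of_pos_of_lt_lt_on hμ hp (neg_pos.2 hneg) hB h0 hfin hgf hδ
    have hneg_add (u : Lp ℝ p μ) : ‖u + -h‖ = ‖-u + h‖ := by rw [← norm_neg, neg_add, neg_neg]
    refine ⟨-h, by rwa [norm_neg], Or.inr ⟨?_, ?_⟩⟩
    · rwa [hneg_add, ← norm_neg f]
    · rwa [hneg_add, ← norm_neg g]
  · obtain ⟨h, hh, hfg'⟩ := exists_perturbation_of_pos_of_lt_lt_on hμ hp hpos hB h0 hfin hfg hδ
    exact ⟨h, hh, Or.inl hfg'⟩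

theorem exists_perturbation_of_not_ae_le (hμa : μ.IsAtomless) (hμs : μ.IsSemiFinite)
    (hp : p ≠ ∞) {f g : Lp ℝ p μ} (hfg : ¬ g ≤ᵐ[μ] f) {δ : ℝ} (hδ : 0 < δ) :
    ∃ h : Lp ℝ p μ, ‖h‖ < δ ∧
      ((‖f‖ < ‖f + h‖ ∧ ‖g + h‖ < ‖g‖) ∨ (‖f + h‖ < ‖f‖ ∧ ‖g‖ < ‖g + h‖)) := by
  obtain ⟨t, ht, B, hB, h0, hfin, hfgB⟩ := hμs.exists_subset_forall_lt_lt
    (Lp.stronglyMeasurable f).measurable (Lp.stronglyMeasurable g).measurable hfg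
  exact exists_perturbation_of_lt_lt_on hμa hp ht hB h0 hfin.ne (.of_forall hfgB) hδ

end MeasureTheory.Lp

theorem stmt13 {Ω : Type*} [MeasurableSpace Ω] (μ : Measure Ω)
    (hatomless : ∀ s : Set Ω, MeasurableSet s → 0 < μ s →
      ∃ t ⊆ s, MeasurableSet t ∧ 0 < μ t ∧ μ t < μ s)
    (hsemifinite : ∀ s : Set Ω, MeasurableSet s → μ s = ∞ →
      ∃ t ⊆ s, MeasurableSet t ∧ 0 < μ t ∧ μ t < ∞)
    (p : ℝ≥0∞) (hp : 1 ≤ p) (hp' : p ≠ ∞) :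
    ∀ f g : Lp ℝ p μ, ‖f‖ = 1 → ‖g‖ = 1 → f ≠ g → ∀ δ : ℝ, 0 < δ →
      ∃ h : Lp ℝ p μ, ‖h‖ < δ ∧
        ((1 < ‖f + h‖ ∧ ‖g + h‖ < 1) ∨ (‖f + h‖ < 1 ∧ 1 < ‖g + h‖)) := by
  intro f g hf hg hne δ hδ
  have : Fact (1 ≤ p) := ⟨hp⟩
  rcases not_and_or.1 fun h : g ≤ᵐ[μ] f ∧ f ≤ᵐ[μ] g => hne (Lp.ext (h.2.antisymm h.1))
    with hgf | hfg
  · simpa only [hf, hg] using Lp.exists_perturbation_of_not_ae_le hatomless hsemifinite hp' hgf hδ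
  · obtain ⟨h, hh, hgfh⟩ := Lp.exists_perturbation_of_not_ae_le hatomless hsemifinite hp' hfg hδ
    rw [hf, hg] at hgfh
    exact ⟨h, hh, hgfh.symm.imp And.symm And.symm⟩
end

section
/- Let μ be a σ-finite atomless measure, 1 ≤ p < ∞, and f, g ∈ Lᵖ(μ) with f ≠ g in Lᵖ. Then there exist a constant d ≠ 0 and a measurable set F' of positive finite measure such that |f(x) − d| < |f(x)| and |g(x) − d| > |g(x)| for almost every x ∈ F' (after possibly swapping f and g). -/
open MeasureTheory ENNReal

/-!
Where `f` and `g` differ, some nonzero rational `r` lies strictly between them, and by countability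
a single such `r` does so on a set `S` of positive measure, say `g < r < f` on `S`. Shifting by
`d = 2r` moves whichever of `f`, `g` lies beyond `r` (seen from `0`) towards `0` and the other one
away from `0`. Finally `S ⊆ {|r| ≤ |f|} ∪ {|r| ≤ |g|}`, which has finite measure by Chebyshev's
inequality because `f, g ∈ Lᵖ` with `0 < p < ∞`.
-/

def SeparatedBy (d a b : ℝ) : Prop := |a - d| < |a| ∧ |b| < |b - d|

lemma separatedBy_two_mul_of_pos {r a b : ℝ} (hr : 0 < r) (hb : b < r) (ha : r < a) :
    SeparatedBy (2 * r) a b := by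
  constructor <;> cases abs_cases a <;> cases abs_cases b <;>
    cases abs_cases (a - 2 * r) <;> cases abs_cases (b - 2 * r) <;> linarith

lemma separatedBy_two_mul_of_neg {r a b : ℝ} (hr : r < 0) (hb : b < r) (ha : r < a) :
    SeparatedBy (2 * r) b a := by
  constructor <;> cases abs_cases a <;> cases abs_cases b <;>
    cases abs_cases (a - 2 * r) <;> cases abs_cases (b - 2 * r) <;> linarith

lemma exists_rat_ne_zero_btwn {a b : ℝ} (h : a < b) : ∃ q : ℚ, q ≠ 0 ∧ a < q ∧ q < b := by
  obtain ⟨q₁, ha, h₁⟩ := exists_rat_btwn h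
  obtain ⟨q₂, h₁₂, hb⟩ := exists_rat_btwn h₁
  by_cases hq₁ : q₁ = 0
  · refine ⟨q₂, ?_, ha.trans h₁₂, hb⟩
    rintro rfl
    simp [hq₁] at h₁₂
  · exact ⟨q₁, hq₁, ha, h₁⟩

section

variable {Ω : Type*} [MeasurableSpace Ω]

def HasSeparatingSet (μ : Measure Ω) (f g : Ω → ℝ) : Prop :=
  ∃ d : ℝ, d ≠ 0 ∧ ∃ F' : Set Ω, MeasurableSet F' ∧ 0 < μ F' ∧ μ F' < ∞ ∧
    ((∀ᵐ x ∂μ, x ∈ F' → SeparatedBy d (f x) (g x)) ∨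
     (∀ᵐ x ∂μ, x ∈ F' → SeparatedBy d (g x) (f x)))

variable {μ : Measure Ω} {f g : Ω → ℝ}

lemma HasSeparatingSet.symm (h : HasSeparatingSet μ f g) : HasSeparatingSet μ g f := by
  obtain ⟨d, hd, F', hF'm, hF'pos, hF'fin, hsep⟩ := h
  exact ⟨d, hd, F', hF'm, hF'pos, hF'fin, hsep.symm⟩

lemma exists_rat_ne_zero_measure_btwn_pos (hfg : ¬ f =ᵐ[μ] g) :
    ∃ r : ℚ, r ≠ 0 ∧
      (0 < μ {x | g x < r ∧ r < f x} ∨ 0 < μ {x | f x < r ∧ r < g x}) := by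
  by_contra! hnull
  refine hfg ?_
  have hae : ∀ᵐ x ∂μ, ∀ r : ℚ, r ≠ 0 →
      ¬ (g x < r ∧ r < f x) ∧ ¬ (f x < r ∧ r < g x) := by
    rw [ae_all_iff]
    intro r
    by_cases hr : r = 0
    · exact Filter.Eventually.of_forall fun _ h => absurd hr h
    · obtain ⟨hgf, hfg'⟩ := hnull r hr
      filter_upwards [measure_eq_zero_iff_ae_notMem.mp (nonpos_iff_eq_zero.mp hgf),
        measure_eq_zero_iff_ae_notMem.mp (nonpos_iff_eq_zero.mp hfg')] with x hx₁ hx₂ _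
      exact ⟨hx₁, hx₂⟩
  filter_upwards [hae] with x hx
  by_contra hne
  rcases lt_or_gt_of_ne hne with hlt | hgt
  · obtain ⟨r, hr, h₁, h₂⟩ := exists_rat_ne_zero_btwn hlt
    exact (hx r hr).2 ⟨h₁, h₂⟩
  · obtain ⟨r, hr, h₁, h₂⟩ := exists_rat_ne_zero_btwn hgt
    exact (hx r hr).1 ⟨h₁, h₂⟩

lemma measure_btwn_lt_top {p : ℝ≥0∞} (hp₀ : p ≠ 0) (hp : p ≠ ∞)
    (hf : MemLp f p μ) (hg : MemLp g p μ) {r : ℝ} (hr : r ≠ 0) :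
    μ {x | g x < r ∧ r < f x} < ∞ := by
  have hε : ENNReal.ofReal |r| ≠ 0 := by simpa using hr
  have hsub : {x | g x < r ∧ r < f x} ⊆
      {x | ENNReal.ofReal |r| ≤ ‖f x‖ₑ} ∪ {x | ENNReal.ofReal |r| ≤ ‖g x‖ₑ} := by
    rintro x ⟨hgx, hfx⟩
    simp only [Set.mem_union, Set.mem_ofPred_eq, Real.enorm_eq_ofReal_abs]
    rcases lt_or_gt_of_ne hr with hr_neg | hr_pos
    · refine Or.inr (ENNReal.ofReal_le_ofReal ?_)
      cases abs_cases r <;> cases abs_cases (g x) <;> linarith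
    · refine Or.inl (ENNReal.ofReal_le_ofReal ?_)
      cases abs_cases r <;> cases abs_cases (f x) <;> linarith
  calc μ {x | g x < r ∧ r < f x}
      ≤ μ {x | ENNReal.ofReal |r| ≤ ‖f x‖ₑ} + μ {x | ENNReal.ofReal |r| ≤ ‖g x‖ₑ} :=
        (measure_mono hsub).trans (measure_union_le _ _)
    _ < ∞ := ENNReal.add_lt_top.mpr
        ⟨hf.meas_ge_lt_top'_enorm hp₀ hp hε (by simp),
          hg.meas_ge_lt_top'_enorm hp₀ hp hε (by simp)⟩

lemma hasSeparatingSet_of_measure_btwn_pos {p : ℝ≥0∞} (hp₀ : p ≠ 0) (hp : p ≠ ∞)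
    (hf : MemLp f p μ) (hg : MemLp g p μ) {r : ℝ} (hr : r ≠ 0)
    (hpos : 0 < μ {x | g x < r ∧ r < f x}) :
    HasSeparatingSet μ f g := by
  set S := {x | g x < r ∧ r < f x}
  have hS : NullMeasurableSet S μ :=
    (nullMeasurableSet_lt hg.aestronglyMeasurable.aemeasurable aemeasurable_const).inter
      (nullMeasurableSet_lt aemeasurable_const hf.aestronglyMeasurable.aemeasurable)
  have hmem : ∀ᵐ x ∂μ, x ∈ toMeasurable μ S → x ∈ S := hS.toMeasurable_ae_eq.le
  refine ⟨2 * r, by positivity, toMeasurable μ S, measurableSet_toMeasurable μ S,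
    by rwa [measure_toMeasurable], ?_, ?_⟩
  · rw [measure_toMeasurable]
    exact measure_btwn_lt_top hp₀ hp hf hg hr
  rcases lt_or_gt_of_ne hr with hr_neg | hr_pos
  · refine Or.inr (hmem.mono fun x hx hxF => ?_)
    exact separatedBy_two_mul_of_neg hr_neg (hx hxF).1 (hx hxF).2
  · refine Or.inl (hmem.mono fun x hx hxF => ?_)
    exact separatedBy_two_mul_of_pos hr_pos (hx hxF).1 (hx hxF).2

end

theorem stmt14_general {Ω : Type*} [MeasurableSpace Ω] (μ : Measure Ω)
    (p : ℝ≥0∞) (hp : 1 ≤ p) (hp' : p ≠ ∞)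
    (f g : Ω → ℝ) (hf : MemLp f p μ) (hg : MemLp g p μ)
    (hfg : ¬ f =ᵐ[μ] g) :
    ∃ d : ℝ, d ≠ 0 ∧ ∃ F' : Set Ω, MeasurableSet F' ∧ 0 < μ F' ∧ μ F' < ∞ ∧
      ((∀ᵐ x ∂μ, x ∈ F' → |f x - d| < |f x| ∧ |g x| < |g x - d|) ∨
       (∀ᵐ x ∂μ, x ∈ F' → |g x - d| < |g x| ∧ |f x| < |f x - d|)) := by
  have hp₀ : p ≠ 0 := (zero_lt_one.trans_le hp).ne'
  obtain ⟨r, hr, hgf | hfg⟩ := exists_rat_ne_zero_measure_btwn_pos hfg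
  · exact hasSeparatingSet_of_measure_btwn_pos hp₀ hp' hf hg (Rat.cast_ne_zero.mpr hr) hgf
  · exact (hasSeparatingSet_of_measure_btwn_pos hp₀ hp' hg hf (Rat.cast_ne_zero.mpr hr) hfg).symm

theorem stmt14 {Ω : Type*} [MeasurableSpace Ω] (μ : Measure Ω) [SigmaFinite μ]
    (hatomless : ∀ s : Set Ω, MeasurableSet s → 0 < μ s →
      ∃ t ⊆ s, MeasurableSet t ∧ 0 < μ t ∧ μ t < μ s)
    (p : ℝ≥0∞) (hp : 1 ≤ p) (hp' : p ≠ ∞)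
    (f g : Ω → ℝ) (hf : MemLp f p μ) (hg : MemLp g p μ)
    (hfg : ¬ f =ᵐ[μ] g) :
    ∃ d : ℝ, d ≠ 0 ∧ ∃ F' : Set Ω, MeasurableSet F' ∧ 0 < μ F' ∧ μ F' < ∞ ∧
      ((∀ᵐ x ∂μ, x ∈ F' → |f x - d| < |f x| ∧ |g x| < |g x - d|) ∨
       (∀ᵐ x ∂μ, x ∈ F' → |g x - d| < |g x| ∧ |f x| < |f x - d|)) :=
  stmt14_general μ p hp hp' f g hf hg hfg
end

section
/- Let 𝒰 be a σ-complete non-principal ultrafilter on Γ and suppose a Banach space E satisfies property (S'). Then the ultrapower E_𝒰 = ℓ∞(Γ, E)/c_𝒰 also satisfies property (S'). -/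
/-!
Unit vectors of `E_𝒰` are represented by families of unit vectors of `E`. Perturbing every
coordinate by (S') in `E` separates the two families coordinatewise, and exactly one of the
two separation patterns holds on a set in `𝒰`. The strict inequalities `1 < ‖xᵢ + zᵢ‖`,
`‖yᵢ + zᵢ‖ < 1` could a priori degenerate to equalities in the ultralimit; σ-completeness
prevents this, since a family of positive reals stays above some `1 / (n + 1)` on a set
in `𝒰`.
-/

open Filter

/-- The subgroup `c_𝒰` of `ℓ∞(Γ, E)` (bounded families, here `lp _ ⊤`) consisting of
families whose norms tend to `0` along the ultrafilter `𝒰`.  The ultrapower `E_𝒰` is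
the quotient `lp (fun _ : Γ => E) ⊤ ⧸ cU 𝒰`, with the quotient norm. -/
noncomputable def cU {Γ E : Type*} [NormedAddCommGroup E] (𝒰 : Ultrafilter Γ) :
    AddSubgroup (lp (fun _ : Γ => E) ⊤) where
  carrier := {x | Tendsto (fun i => ‖x i‖) (𝒰 : Filter Γ) (nhds 0)}
  add_mem' := by
    intro a b ha hb
    have h := ha.add hb
    rw [add_zero] at h
    refine squeeze_zero (fun i => norm_nonneg _) (fun i => ?_) h
    simp [lp.coeFn_add, norm_add_le]
  zero_mem' := by
    simp [lp.coeFn_zero, tendsto_const_nhds]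
  neg_mem' := by
    intro a ha
    simpa [lp.coeFn_neg] using ha

open Topology

def PropertyS' (F : Type*) [SeminormedAddCommGroup F] : Prop :=
  ∀ x y : F, ‖x‖ = 1 → ‖y‖ = 1 → x ≠ y → ∀ δ : ℝ, 0 < δ →
    ∃ z : F, ‖z‖ < δ ∧ ((1 < ‖x + z‖ ∧ ‖y + z‖ < 1) ∨ (‖x + z‖ < 1 ∧ 1 < ‖y + z‖))

theorem Ultrafilter.exists_pos_eventually_le_of_iInter_mem {Γ : Type*} {𝒰 : Ultrafilter Γ}
    (hσ : ∀ s : ℕ → Set Γ, (∀ n, s n ∈ 𝒰) → (⋂ n, s n) ∈ 𝒰)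
    {f : Γ → ℝ} (h : ∀ᶠ i in 𝒰, 0 < f i) : ∃ c, 0 < c ∧ ∀ᶠ i in 𝒰, c ≤ f i := by
  by_contra! hc
  have hsmall : ∀ᶠ i in 𝒰, ∀ n : ℕ, f i < 1 / (n + 1) :=
    mem_of_superset (hσ (fun n => {i | f i < 1 / (n + 1)}) fun n => hc _ Nat.one_div_pos_of_nat)
      fun i hi => Set.mem_iInter.1 hi
  obtain ⟨i, hpos, hi⟩ := (h.and hsmall).exists
  obtain ⟨n, hn⟩ := exists_nat_one_div_lt hpos
  exact (hi n).not_gt hn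

theorem norm_inv_norm_smul_sub_self {E : Type*} [NormedAddCommGroup E] [NormedSpace ℝ E]
    {v : E} (hv : v ≠ 0) : ‖‖v‖⁻¹ • v - v‖ = |1 - ‖v‖| := by
  have hscalar : (‖v‖⁻¹ - 1) * ‖v‖ = 1 - ‖v‖ := by
    field_simp [norm_ne_zero_iff.2 hv]
  rw [show ‖v‖⁻¹ • v - v = (‖v‖⁻¹ - 1) • v by rw [sub_smul, one_smul], norm_smul,
    Real.norm_eq_abs, ← hscalar, abs_mul, abs_norm]

namespace cU

variable {Γ E : Type*} [NormedAddCommGroup E] {𝒰 : Ultrafilter Γ}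

local notation "ℓ∞" => lp (fun _ : Γ => E) ⊤
local notation "E_𝒰" => ℓ∞ ⧸ cU (E := E) 𝒰

theorem mk_eq_mk_iff {x y : ℓ∞} :
    (x : E_𝒰) = y ↔ Tendsto (fun i => ‖x i - y i‖) 𝒰 (𝓝 0) := by
  rw [QuotientAddGroup.eq]
  show Tendsto (fun i => ‖-x i + y i‖) 𝒰 (𝓝 0) ↔ _
  simp only [neg_add_eq_sub, norm_sub_rev]

theorem mk_eq_mk_of_eventually_eq {x y : ℓ∞} (h : ∀ᶠ i in 𝒰, x i = y i) : (x : E_𝒰) = y :=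
  mk_eq_mk_iff.2 <| tendsto_const_nhds.congr' <| h.mono fun i hi => by simp [hi]

theorem eventually_ne_of_mk_ne {x y : ℓ∞} (h : (x : E_𝒰) ≠ y) : ∀ᶠ i in 𝒰, x i ≠ y i :=
  Ultrafilter.eventually_not.2 fun hxy => h (mk_eq_mk_of_eventually_eq hxy)

theorem norm_mk_le_of_eventually_norm_le {x : ℓ∞} {C : ℝ} (h : ∀ᶠ i in 𝒰, ‖x i‖ ≤ C) :
    ‖(x : E_𝒰)‖ ≤ C := by
  obtain ⟨i₀, hi₀⟩ := h.exists
  have hC : 0 ≤ C := (norm_nonneg _).trans hi₀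
  let w : Γ → E := fun i => if ‖x i‖ ≤ C then x i else 0
  have hw : ∀ i, ‖w i‖ ≤ C := fun i => by
    dsimp only [w]
    split_ifs with hi <;> simp [hi, hC]
  let w' : ℓ∞ := ⟨w, memℓp_infty ⟨C, Set.forall_mem_range.2 hw⟩⟩
  calc ‖(x : E_𝒰)‖ = ‖(w' : E_𝒰)‖ :=
        congrArg norm <| mk_eq_mk_of_eventually_eq <| h.mono fun i hi => (if_pos hi).symm
    _ ≤ ‖w'‖ := QuotientAddGroup.norm_mk_le_norm
    _ ≤ C := lp.norm_le_of_forall_le hC hw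

theorem le_norm_mk_of_eventually_le_norm {x : ℓ∞} {C : ℝ} (h : ∀ᶠ i in 𝒰, C ≤ ‖x i‖) :
    C ≤ ‖(x : E_𝒰)‖ := by
  refine QuotientAddGroup.le_norm_iff.2 fun m hm => ?_
  have hlim : Tendsto (fun i => ‖m‖ + ‖m i - x i‖) 𝒰 (𝓝 ‖m‖) := by
    simpa using tendsto_const_nhds.add (mk_eq_mk_iff.1 hm)
  refine ge_of_tendsto hlim (h.mono fun i hi => hi.trans ?_)
  calc ‖x i‖ ≤ ‖m i‖ + ‖x i - m i‖ := norm_le_norm_add_norm_sub' (x i) (m i)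
    _ ≤ ‖m‖ + ‖m i - x i‖ := by
      rw [norm_sub_rev]
      gcongr
      exact lp.norm_apply_le_norm ENNReal.top_ne_zero m i

theorem tendsto_norm_apply_norm_mk (x : ℓ∞) :
    Tendsto (fun i => ‖x i‖) 𝒰 (𝓝 ‖(x : E_𝒰)‖) := by
  refine tendsto_order.2 ⟨fun a ha => ?_, fun b hb => ?_⟩
  · by_contra h
    rw [← Ultrafilter.eventually_not] at h
    exact ha.not_ge <| norm_mk_le_of_eventually_norm_le <| h.mono fun i => le_of_not_gt
  · by_contra h
    rw [← Ultrafilter.eventually_not] at h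
    exact hb.not_ge <| le_norm_mk_of_eventually_le_norm <| h.mono fun i => le_of_not_gt

theorem one_lt_norm_mk_and_norm_mk_lt_one
    (hσ : ∀ s : ℕ → Set Γ, (∀ n, s n ∈ 𝒰) → (⋂ n, s n) ∈ 𝒰) {x y : ℓ∞}
    (h : ∀ᶠ i in 𝒰, 1 < ‖x i‖ ∧ ‖y i‖ < 1) : 1 < ‖(x : E_𝒰)‖ ∧ ‖(y : E_𝒰)‖ < 1 := by
  obtain ⟨c, hc, hx⟩ := Ultrafilter.exists_pos_eventually_le_of_iInter_mem hσ
    (h.mono fun i hi => sub_pos.2 hi.1)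
  obtain ⟨d, hd, hy⟩ := Ultrafilter.exists_pos_eventually_le_of_iInter_mem hσ
    (h.mono fun i hi => sub_pos.2 hi.2)
  have hx' : 1 + c ≤ ‖(x : E_𝒰)‖ :=
    le_norm_mk_of_eventually_le_norm <| hx.mono fun i hi => by linarith
  have hy' : ‖(y : E_𝒰)‖ ≤ 1 - d :=
    norm_mk_le_of_eventually_norm_le <| hy.mono fun i hi => by linarith
  constructor <;> linarith

theorem exists_mk_eq_and_norm_apply_eq_one [NormedSpace ℝ E] {x : E_𝒰} (hx : ‖x‖ = 1) :
    ∃ x' : ℓ∞, (x' : E_𝒰) = x ∧ ∀ i, ‖x' i‖ = 1 := by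
  classical
  obtain ⟨x, rfl⟩ := QuotientAddGroup.mk_surjective x
  have hlim := tendsto_norm_apply_norm_mk (𝒰 := 𝒰) x
  rw [hx] at hlim
  have hne : ∀ᶠ i in 𝒰, x i ≠ 0 :=
    (hlim.eventually (eventually_gt_nhds one_pos)).mono fun i hi => norm_pos_iff.1 hi
  obtain ⟨i₀, hi₀⟩ := hne.exists
  have hunit : ∀ i, ‖if x i = 0 then ‖x i₀‖⁻¹ • x i₀ else ‖x i‖⁻¹ • x i‖ = 1 := fun i => by
    split_ifs with hi
    exacts [norm_smul_inv_norm hi₀, norm_smul_inv_norm hi]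
  refine ⟨⟨_, memℓp_infty ⟨1, Set.forall_mem_range.2 fun i => (hunit i).le⟩⟩, ?_, hunit⟩
  refine mk_eq_mk_iff.2 ?_
  have hdist : Tendsto (fun i => |1 - ‖x i‖|) 𝒰 (𝓝 0) := by
    simpa using ((tendsto_const_nhds (x := (1 : ℝ))).sub hlim).abs
  refine hdist.congr' (hne.mono fun i hi => ?_)
  show |1 - ‖x i‖| = ‖(if x i = 0 then _ else ‖x i‖⁻¹ • x i) - x i‖
  rw [if_neg hi, norm_inv_norm_smul_sub_self hi]

end cU

theorem PropertyS'.exists_lp_perturbation {Γ E : Type*} [NormedAddCommGroup E]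
    (hS' : PropertyS' E) {x y : lp (fun _ : Γ => E) ⊤} (hx : ∀ i, ‖x i‖ = 1)
    (hy : ∀ i, ‖y i‖ = 1) {δ : ℝ} (hδ : 0 < δ) :
    ∃ z : lp (fun _ : Γ => E) ⊤, ‖z‖ ≤ δ ∧ ∀ i, x i ≠ y i →
      (1 < ‖x i + z i‖ ∧ ‖y i + z i‖ < 1) ∨ (‖x i + z i‖ < 1 ∧ 1 < ‖y i + z i‖) := by
  have : ∀ i, ∃ w : E, ‖w‖ ≤ δ ∧ (x i ≠ y i →
      (1 < ‖x i + w‖ ∧ ‖y i + w‖ < 1) ∨ (‖x i + w‖ < 1 ∧ 1 < ‖y i + w‖)) := fun i => by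
    by_cases hxy : x i = y i
    · exact ⟨0, by simpa using hδ.le, fun h => absurd hxy h⟩
    · obtain ⟨w, hw, hsep⟩ := hS' _ _ (hx i) (hy i) hxy δ hδ
      exact ⟨w, hw.le, fun _ => hsep⟩
  choose w hw hsep using this
  exact ⟨⟨w, memℓp_infty ⟨δ, Set.forall_mem_range.2 hw⟩⟩, lp.norm_le_of_forall_le hδ.le hw, hsep⟩

theorem stmt17_general {Γ E : Type*} [NormedAddCommGroup E] [NormedSpace ℝ E]
    (𝒰 : Ultrafilter Γ)
    (hσ : ∀ s : ℕ → Set Γ, (∀ n, s n ∈ 𝒰) → (⋂ n, s n) ∈ 𝒰)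
    (hS' : ∀ x y : E, ‖x‖ = 1 → ‖y‖ = 1 → x ≠ y → ∀ δ : ℝ, 0 < δ →
      ∃ z : E, ‖z‖ < δ ∧
        ((1 < ‖x + z‖ ∧ ‖y + z‖ < 1) ∨ (‖x + z‖ < 1 ∧ 1 < ‖y + z‖))) :
    ∀ x y : lp (fun _ : Γ => E) ⊤ ⧸ cU (E := E) 𝒰,
      ‖x‖ = 1 → ‖y‖ = 1 → x ≠ y → ∀ δ : ℝ, 0 < δ →
        ∃ z : lp (fun _ : Γ => E) ⊤ ⧸ cU (E := E) 𝒰, ‖z‖ < δ ∧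
          ((1 < ‖x + z‖ ∧ ‖y + z‖ < 1) ∨ (‖x + z‖ < 1 ∧ 1 < ‖y + z‖)) := by
  intro x y hx hy hxy δ hδ
  obtain ⟨a, rfl, ha⟩ := cU.exists_mk_eq_and_norm_apply_eq_one hx
  obtain ⟨b, rfl, hb⟩ := cU.exists_mk_eq_and_norm_apply_eq_one hy
  obtain ⟨z, hzδ, hz⟩ := PropertyS'.exists_lp_perturbation hS' ha hb (half_pos hδ)
  refine ⟨z, QuotientAddGroup.norm_mk_le_norm.trans_lt (hzδ.trans_lt (half_lt_self hδ)), ?_⟩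
  rw [← QuotientAddGroup.mk_add, ← QuotientAddGroup.mk_add]
  rcases Ultrafilter.eventually_or.1 ((cU.eventually_ne_of_mk_ne hxy).mono hz) with h | h
  · exact Or.inl (cU.one_lt_norm_mk_and_norm_mk_lt_one hσ h)
  · exact Or.inr (cU.one_lt_norm_mk_and_norm_mk_lt_one hσ (h.mono fun _ => And.symm)).symm

theorem stmt17 {Γ E : Type*} [NormedAddCommGroup E] [NormedSpace ℝ E] [CompleteSpace E]
    (𝒰 : Ultrafilter Γ)
    (hσ : ∀ s : ℕ → Set Γ, (∀ n, s n ∈ 𝒰) → (⋂ n, s n) ∈ 𝒰)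
    (hnp : ∀ i : Γ, (𝒰 : Filter Γ) ≠ pure i)
    (hS' : ∀ x y : E, ‖x‖ = 1 → ‖y‖ = 1 → x ≠ y → ∀ δ : ℝ, 0 < δ →
      ∃ z : E, ‖z‖ < δ ∧
        ((1 < ‖x + z‖ ∧ ‖y + z‖ < 1) ∨ (‖x + z‖ < 1 ∧ 1 < ‖y + z‖))) :
    ∀ x y : lp (fun _ : Γ => E) ⊤ ⧸ cU (E := E) 𝒰,
      ‖x‖ = 1 → ‖y‖ = 1 → x ≠ y → ∀ δ : ℝ, 0 < δ →
        ∃ z : lp (fun _ : Γ => E) ⊤ ⧸ cU (E := E) 𝒰, ‖z‖ < δ ∧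
          ((1 < ‖x + z‖ ∧ ‖y + z‖ < 1) ∨ (‖x + z‖ < 1 ∧ 1 < ‖y + z‖)) :=
  stmt17_general 𝒰 hσ hS'
end
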